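/- arXiv:2403.02345 — 13 statements merged into one kernel-verified Lean document; each statement's English description precedes it below -/
import Mathlib

section
/- For every a ∈ (0,1), the quadratic function h_a(x) = x² - ((a+2)/4)x - 1/(16(a-1)) is strictly positive for all real x. -/
/-!
Completing the square, `x² - b x + c > 0` for all `x` as soon as `b² < 4c`. For `h_a` this
reduces to `(a + 2)² (1 - a) < 4`, and indeed `4 - (a + 2)² (1 - a) = a² (a + 3)`.
-/

lemma sq_sub_mul_add_pos {b c : ℝ} (h : b ^ 2 < 4 * c) (x : ℝ) : 0 < x ^ 2 - b * x + c := by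
  nlinarith [sq_nonneg (2 * x - b)]

lemma add_two_sq_mul_one_sub_lt_four {a : ℝ} (ha : a ≠ 0) (ha3 : -3 < a) :
    (a + 2) ^ 2 * (1 - a) < 4 := by
  have key : 4 - (a + 2) ^ 2 * (1 - a) = a ^ 2 * (a + 3) := by ring
  have : 0 < a ^ 2 * (a + 3) := mul_pos (sq_pos_of_ne_zero ha) (by linarith)
  linarith

theorem stmt_0 (a : ℝ) (ha : a ∈ Set.Ioo (0:ℝ) 1) :
    ∀ x : ℝ, 0 < x^2 - ((a+2)/4)*x - 1/(16*(a-1)) := by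
  obtain ⟨ha0, ha1⟩ := ha
  have hconst : -(1 / (16 * (a - 1))) = 1 / (16 * (1 - a)) := by
    rw [← div_neg, neg_mul_eq_mul_neg, neg_sub]
  have hdisc : ((a + 2) / 4) ^ 2 < 4 * (1 / (16 * (1 - a))) := by
    have h := add_two_sq_mul_one_sub_lt_four ha0.ne' (by linarith)
    rw [mul_one_div, lt_div_iff₀ (by linarith)]
    linarith [show ((a + 2) / 4) ^ 2 * (16 * (1 - a)) = (a + 2) ^ 2 * (1 - a) by ring]
  intro x
  rw [sub_eq_add_neg (x ^ 2 - _), hconst]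
  exact sq_sub_mul_add_pos hdisc x
end

section
/- For every a ∈ (1,2], the quadratic function h_a(x) = x² - ((a+2)/4)x - 1/(16(a-1)) is strictly negative for all x ∈ (0,1). -/
/-! A monic quadratic `q` lies strictly below its chord on `(0, 1)`, since
`q x = (1 - x) q 0 + x q 1 - x (1 - x)`. Here `q 0 = -1/(16(a-1)) < 0` and
`q 1 = -(2a - 3)² / (16(a-1)) ≤ 0`. -/

open Set

theorem sq_sub_mul_sub_neg_of_mem_Ioo {b c x : ℝ} (hc : 0 ≤ c) (h1 : 1 - b - c ≤ 0)
    (hx : x ∈ Ioo (0 : ℝ) 1) : x ^ 2 - b * x - c < 0 := by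
  have hchord : x ^ 2 - b * x - c = (1 - x) * (-c) + x * (1 - b - c) - x * (1 - x) := by ring
  have hgap : 0 < x * (1 - x) := mul_pos hx.1 (sub_pos.2 hx.2)
  rw [hchord]
  nlinarith [mul_nonneg (sub_pos.2 hx.2).le hc, mul_nonpos_of_nonneg_of_nonpos hx.1.le h1]

theorem one_sub_add_two_div_four_sub_inv_nonpos {a : ℝ} (ha : 1 < a) :
    1 - (a + 2) / 4 - 1 / (16 * (a - 1)) ≤ 0 := by
  have hsq : 1 - (a + 2) / 4 - 1 / (16 * (a - 1)) = -(2 * a - 3) ^ 2 / (16 * (a - 1)) := by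
    have : a - 1 ≠ 0 := by linarith
    field_simp
    ring
  rw [hsq]
  exact div_nonpos_of_nonpos_of_nonneg (neg_nonpos.2 (sq_nonneg _)) (by linarith)

theorem stmt_1 (a : ℝ) (ha : a ∈ Set.Ioc (1:ℝ) 2) :
    ∀ x ∈ Set.Ioo (0:ℝ) 1, x^2 - ((a+2)/4)*x - 1/(16*(a-1)) < 0 := fun _ hx =>
  sq_sub_mul_sub_neg_of_mem_Ioo (one_div_nonneg.2 (by linarith [ha.1]))
    (one_sub_add_two_div_four_sub_inv_nonpos ha.1) hx
end

section
/- For every real a > 1, (a₁a₂ + a₁)(a₁a₂ - a₂) = (a - 3/2)²/(64(a-1)²). -/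
/-!
With `s = √((a+2)² + 4/(a-1))` and `b = a + 2`, the numbers `a₁ = (s + b)/8` and `a₂ = (s - b)/8`
satisfy `a₁ - a₂ = b/4` and `a₁a₂ = (s² - b²)/64 = 1/(16(a-1))`. Writing `p = a₁a₂`, the left side is
`p (p + (a₁ - a₂) - 1) = p (p + (a-2)/4)`, and `1 + 4(a-1)(a-2) = (2a-3)²` gives the square.
-/

theorem mul_add_mul_sub_eq {R : Type*} [CommRing R] (x y : R) :
    (x * y + x) * (x * y - y) = x * y * (x * y + (x - y) - 1) := by
  ring

theorem add_div_mul_sub_div_of_sq_eq {K : Type*} [Field K] {s b c : K} (hs : s ^ 2 = b ^ 2 + c)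
    (n : K) : (s + b) / n * ((s - b) / n) = c / n ^ 2 := by
  rw [div_mul_div_comm, ← sq_sub_sq, hs, add_sub_cancel_left, sq]

theorem stmt_5 (a : ℝ) (ha : 1 < a)
    (a₁ a₂ : ℝ)
    (ha₁ : a₁ = (Real.sqrt ((a+2)^2 + 4/(a-1)) + a + 2)/8)
    (ha₂ : a₂ = (Real.sqrt ((a+2)^2 + 4/(a-1)) - (a+2))/8) :
    (a₁*a₂ + a₁) * (a₁*a₂ - a₂) = (a - 3/2)^2 / (64*(a-1)^2) := by
  have ha' : a - 1 ≠ 0 := sub_ne_zero.mpr ha.ne'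
  have hs : Real.sqrt ((a+2)^2 + 4/(a-1)) ^ 2 = (a+2)^2 + 4/(a-1) :=
    Real.sq_sqrt (by have := sub_pos.mpr ha; positivity)
  have hprod : a₁ * a₂ = 1 / (16 * (a - 1)) := by
    rw [ha₁, ha₂, add_assoc, add_div_mul_sub_div_of_sq_eq hs]
    field_simp
    norm_num
  have hdiff : a₁ - a₂ = (a + 2) / 4 := by
    rw [ha₁, ha₂]
    ring
  rw [mul_add_mul_sub_eq, hprod, hdiff]
  field_simp
  ring
end

section
/- For every real a > 1, √((a₂+1)/a₂) - √((a₁-1)/a₁) = 2a·√((a-1)(a+3)) / √(a² + a - 3/2 + |a - 3/2|). -/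
/-!
With `s = √((a-1)(a+3))` one has `(a-1)·√((a+2)² + 4/(a-1)) = a·s`, and this turns the two
quotients into perfect squares: `(a₂+1)/a₂ = (a+s)²` and `(a₁-1)/a₁ = (a-s)²`. The left-hand side
is therefore `(a+s) - |a-s| = 2·min a s`. The radicand of the denominator is `max (a²) (s²)`, so
the right-hand side is `2·a·s / max a s = 2·min a s` as well.
-/

section

variable {K : Type*} [Field K] [LinearOrder K]

lemma add_sub_abs_sub_eq_two_mul_min [IsStrictOrderedRing K] (x y : K) : x + y - |x - y| = 2 * min x y := by
  linarith [min_add_max x y, max_sub_min_eq_abs' x y]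

lemma add_add_abs_sub_eq_two_mul_max [IsStrictOrderedRing K] (x y : K) : x + y + |x - y| = 2 * max x y := by
  linarith [min_add_max x y, max_sub_min_eq_abs' x y]

lemma mul_div_max_eq_min {x : K} (hx : 0 < x) (y : K) : x * y / max x y = min x y := by
  rw [← min_mul_max x y, mul_div_cancel_right₀ _ (lt_max_of_lt_left hx).ne']

end

lemma Real.sqrt_max (x y : ℝ) : √(max x y) = max √x √y :=
  Real.sqrt_monotone.map_max

section

variable {a : ℝ}

lemma sub_one_mul_sqrt_eq (ha : 1 < a) :
    (a - 1) * √((a + 2) ^ 2 + 4 / (a - 1)) = a * √((a - 1) * (a + 3)) := by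
  have hpos : 0 < a - 1 := by linarith
  calc (a - 1) * √((a + 2) ^ 2 + 4 / (a - 1))
      = √((a - 1) ^ 2 * ((a + 2) ^ 2 + 4 / (a - 1))) := by
        rw [Real.sqrt_mul (sq_nonneg _), Real.sqrt_sq hpos.le]
    _ = √(a ^ 2 * ((a - 1) * (a + 3))) := by
        congr 1
        field_simp
        ring
    _ = a * √((a - 1) * (a + 3)) := by
        rw [Real.sqrt_mul (sq_nonneg _), Real.sqrt_sq (by linarith)]

lemma sq_sqrt_sub_one_mul_add_three (ha : 1 < a) :
    √((a - 1) * (a + 3)) ^ 2 = (a - 1) * (a + 3) :=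
  Real.sq_sqrt (mul_nonneg (by linarith) (by linarith))

lemma add_two_lt_sqrt (ha : 1 < a) : a + 2 < √((a + 2) ^ 2 + 4 / (a - 1)) := by
  have : 0 < 4 / (a - 1) := div_pos four_pos (by linarith)
  rw [Real.lt_sqrt (by linarith)]
  linarith

lemma add_one_div_eq_sq {a₂ : ℝ} (ha : 1 < a)
    (ha₂ : a₂ = (√((a + 2) ^ 2 + 4 / (a - 1)) - (a + 2)) / 8) :
    (a₂ + 1) / a₂ = (a + √((a - 1) * (a + 3))) ^ 2 := by
  have hpos : 0 < a₂ := by rw [ha₂]; linarith [add_two_lt_sqrt ha]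
  rw [div_eq_iff hpos.ne']
  refine mul_left_cancel₀ (sub_ne_zero.2 ha.ne') ?_
  subst ha₂
  linear_combination (1 - (a + √((a - 1) * (a + 3))) ^ 2) / 8 * sub_one_mul_sqrt_eq ha
    - (a * √((a - 1) * (a + 3)) + a ^ 2 - a + 2) / 8 * sq_sqrt_sub_one_mul_add_three ha

lemma sub_one_div_eq_sq {a₁ : ℝ} (ha : 1 < a)
    (ha₁ : a₁ = (√((a + 2) ^ 2 + 4 / (a - 1)) + a + 2) / 8) :
    (a₁ - 1) / a₁ = (a - √((a - 1) * (a + 3))) ^ 2 := by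
  have hpos : 0 < a₁ := by rw [ha₁]; linarith [Real.sqrt_nonneg ((a + 2) ^ 2 + 4 / (a - 1))]
  rw [div_eq_iff hpos.ne']
  refine mul_left_cancel₀ (sub_ne_zero.2 ha.ne') ?_
  subst ha₁
  linear_combination (1 - (a - √((a - 1) * (a + 3))) ^ 2) / 8 * sub_one_mul_sqrt_eq ha
    - (a * √((a - 1) * (a + 3)) - a ^ 2 + a - 2) / 8 * sq_sqrt_sub_one_mul_add_three ha

lemma sq_add_sub_add_abs_eq_max :
    a ^ 2 + a - 3 / 2 + |a - 3 / 2| = max (a ^ 2) ((a - 1) * (a + 3)) := by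
  have h : |a ^ 2 - (a - 1) * (a + 3)| = 2 * |a - 3 / 2| := by
    rw [← abs_two, ← abs_mul, ← abs_neg]
    ring_nf
  linarith [add_add_abs_sub_eq_two_mul_max (a ^ 2) ((a - 1) * (a + 3))]

end

theorem stmt_7 (a : ℝ) (ha : 1 < a)
    (a₁ a₂ : ℝ)
    (ha₁ : a₁ = (Real.sqrt ((a+2)^2 + 4/(a-1)) + a + 2)/8)
    (ha₂ : a₂ = (Real.sqrt ((a+2)^2 + 4/(a-1)) - (a+2))/8) :
    Real.sqrt ((a₂+1)/a₂) - Real.sqrt ((a₁-1)/a₁) =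
      2*a*Real.sqrt ((a-1)*(a+3)) / Real.sqrt (a^2 + a - 3/2 + |a - 3/2|) := by
  have ha₀ : 0 < a := by linarith
  set s := √((a - 1) * (a + 3)) with hs
  calc √((a₂ + 1) / a₂) - √((a₁ - 1) / a₁) = √((a + s) ^ 2) - √((a - s) ^ 2) := by
        rw [add_one_div_eq_sq ha ha₂, sub_one_div_eq_sq ha ha₁]
    _ = 2 * min a s := by
        rw [Real.sqrt_sq (by positivity), Real.sqrt_sq_eq_abs, add_sub_abs_sub_eq_two_mul_min]
    _ = 2 * (a * s / max a s) := by rw [mul_div_max_eq_min ha₀ s]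
    _ = 2 * a * s / √(a ^ 2 + a - 3 / 2 + |a - 3 / 2|) := by
        rw [sq_add_sub_add_abs_eq_max, Real.sqrt_max, Real.sqrt_sq ha₀.le, ← hs]
        ring
end

section
/- For every real a ∈ (1, 3/2], (a₂·√((a₁-1)/a₁) + a₁·√((a₂+1)/a₂))² = (a²(a-1)(a + 5/2)² - 2a + 3) / (4(a-1)). -/
/-!
With `s = √((a+2)² + 4/(a-1))`, the numbers `a₁ = (s + (a+2))/8` and `a₂ = (s - (a+2))/8` satisfy
`a₁ a₂ = 1/(16(a-1))` and `a₁ - a₂ = (a+2)/4`. Hence the product of the squares of the two summands,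
`a₁ a₂ (a₁ - 1)(a₂ + 1) = a₁ a₂ (a₁ a₂ + (a₁ - a₂) - 1)`, is the perfect square `((3-2a)/(16(a-1)))²`,
so the cross term of the square is rational in `a`; its sign is right exactly because `a ≤ 3/2`.
The sum of the squares is a rational function of `a₁ a₂` and `a₁ - a₂` as well.
-/

open Real

lemma mul_sqrt_add_mul_sqrt_sq {u v x y r : ℝ} (hu : 0 ≤ u) (hv : 0 ≤ v) (hx : 0 ≤ x) (hy : 0 ≤ y)
    (hr : 0 ≤ r) (h : u ^ 2 * x * (v ^ 2 * y) = r ^ 2) :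
    (u * √x + v * √y) ^ 2 = u ^ 2 * x + v ^ 2 * y + 2 * r := by
  have hcross : u * √x * (v * √y) = r := by
    refine (sq_eq_sq₀ (by positivity) hr).1 ?_
    rw [← h, mul_pow, mul_pow, mul_pow, sq_sqrt hx, sq_sqrt hy]
  rw [add_sq, mul_pow, mul_pow, sq_sqrt hx, sq_sqrt hy, mul_assoc 2, hcross]
  ring

lemma lt_sqrt_sq_add (b : ℝ) {c : ℝ} (hc : 0 < c) : b < √(b ^ 2 + c) :=
  (le_abs_self b).trans_lt <| by
    rw [← sqrt_sq_eq_abs]; exact sqrt_lt_sqrt (sq_nonneg b) (lt_add_of_pos_right _ hc)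

lemma sqrt_sq_add_add_mul_sqrt_sq_add_sub (b : ℝ) {c : ℝ} (hc : 0 ≤ c) :
    (√(b ^ 2 + c) + b) * (√(b ^ 2 + c) - b) = c := by
  linear_combination sq_sqrt (by positivity : 0 ≤ b ^ 2 + c)

section

variable {x y : ℝ}

lemma sq_mul_sub_one_div_mul_sq_mul_add_one_div (hx : x ≠ 0) (hy : y ≠ 0) :
    y ^ 2 * ((x - 1) / x) * (x ^ 2 * ((y + 1) / y)) = x * y * ((x - 1) * (y + 1)) := by
  field_simp

lemma sq_mul_sub_one_div_add_sq_mul_add_one_div (hx : x ≠ 0) (hy : y ≠ 0) :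
    y ^ 2 * ((x - 1) / x) + x ^ 2 * ((y + 1) / y) =
      (x - y) ^ 2 + 2 * (x * y) + 3 * (x - y) + (x - y) ^ 3 / (x * y) := by
  field_simp
  ring

end

theorem stmt_8 (a : ℝ) (ha : a ∈ Set.Ioc (1:ℝ) (3/2))
    (a₁ a₂ : ℝ)
    (ha₁ : a₁ = (Real.sqrt ((a+2)^2 + 4/(a-1)) + a + 2)/8)
    (ha₂ : a₂ = (Real.sqrt ((a+2)^2 + 4/(a-1)) - (a+2))/8) :
    (a₂ * Real.sqrt ((a₁-1)/a₁) + a₁ * Real.sqrt ((a₂+1)/a₂))^2 =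
      (a^2*(a-1)*(a + 5/2)^2 - 2*a + 3) / (4*(a-1)) := by
  obtain ⟨ha_gt, ha_le⟩ := ha
  have hsub : 0 < a - 1 := by linarith
  have hc : 0 < 4 / (a - 1) := by positivity
  have ha₂_pos : 0 < a₂ := by rw [ha₂]; linarith [lt_sqrt_sq_add (a + 2) hc]
  have hmul : a₁ * a₂ = 1 / (16 * (a - 1)) := by
    rw [ha₁, ha₂, add_assoc, div_mul_div_comm, sqrt_sq_add_add_mul_sqrt_sq_add_sub (a + 2) hc.le]
    field_simp
    ring
  have hdiff : a₁ - a₂ = (a + 2) / 4 := by rw [ha₁, ha₂]; ring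
  have hkey : (a₁ - 1) * (a₂ + 1) = (3 - 2 * a) ^ 2 / (16 * (a - 1)) := by
    rw [show (a₁ - 1) * (a₂ + 1) = a₁ * a₂ + (a₁ - a₂) - 1 by ring, hmul, hdiff]
    field_simp
    ring
  have ha₁_ge : 1 ≤ a₁ := by
    have hkey_nonneg : 0 ≤ (a₁ - 1) * (a₂ + 1) := hkey ▸ by positivity
    linarith [nonneg_of_mul_nonneg_left hkey_nonneg (by linarith : 0 < a₂ + 1)]
  have ha₁_pos : 0 < a₁ := by linarith
  rw [mul_sqrt_add_mul_sqrt_sq (r := (3 - 2 * a) / (16 * (a - 1))) ha₂_pos.le ha₁_pos.le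
      (div_nonneg (by linarith) ha₁_pos.le) (div_nonneg (by linarith) ha₂_pos.le)
      (div_nonneg (by linarith) (by linarith)),
    sq_mul_sub_one_div_add_sq_mul_add_one_div ha₁_pos.ne' ha₂_pos.ne', hmul, hdiff]
  · field_simp
    ring
  · rw [sq_mul_sub_one_div_mul_sq_mul_add_one_div ha₁_pos.ne' ha₂_pos.ne', hmul, hkey]
    field_simp
end

section
/- For every real a ∈ (3/2, 2], (a₂·√((a₁-1)/a₁) + a₁·√((a₂+1)/a₂))² = a²(a-1)(a + 5/2)² / (4(a-1)) = a²(a + 5/2)²/4. -/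
/-!
Put `D = √((a+2)² + 4/(a-1))`. By Vieta, `a₁ - a₂ = (a+2)/4` and `a₁ a₂ = 1/(16(a-1))`, and these two
relations decide everything. They give `(a₁-1)(a₂+1) = (2a-3)² a₁ a₂`, so the product of the two square
roots is `2a - 3`; the squares of the two summands are rational in `a₁ - a₂` and `a₁ a₂`, and the
resulting rational function of `a` collapses to `a²(a + 5/2)²/4`.
-/

open Real

lemma sq_mul_sqrt_add_mul_sqrt {u v : ℝ} (hu : 0 ≤ u) (hv : 0 ≤ v) (x y : ℝ) :
    (x * √u + y * √v) ^ 2 = x ^ 2 * u + y ^ 2 * v + 2 * x * y * √(u * v) := by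
  rw [add_sq, mul_pow, mul_pow, sq_sqrt hu, sq_sqrt hv, sqrt_mul hu]
  ring

lemma sqrt_add_mul_sqrt_sub (s c : ℝ) (h : 0 ≤ s ^ 2 + c) :
    (√(s ^ 2 + c) + s) * (√(s ^ 2 + c) - s) = c := by
  linear_combination sq_sqrt h

section

variable {a a₁ a₂ : ℝ}

lemma sub_one_mul_add_one_eq (hsub : a₁ - a₂ = (a + 2) / 4) (hmul : a₁ * a₂ = 1 / (16 * (a - 1)))
    (ha : a ≠ 1) : (a₁ - 1) * (a₂ + 1) = (2 * a - 3) ^ 2 * (a₁ * a₂) := by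
  have hmul' : 16 * (a - 1) * (a₁ * a₂) = 1 := by
    rw [hmul]; field_simp [sub_ne_zero.2 ha]
  linear_combination hsub - (a - 2) / 4 * hmul'

theorem sq_mul_sqrt_add_mul_sqrt_eq (ha : 3 / 2 ≤ a) (ha₂ : 0 < a₂)
    (hsub : a₁ - a₂ = (a + 2) / 4) (hmul : a₁ * a₂ = 1 / (16 * (a - 1))) :
    (a₂ * √((a₁ - 1) / a₁) + a₁ * √((a₂ + 1) / a₂)) ^ 2 = a ^ 2 * (a + 5 / 2) ^ 2 / 4 := by
  have ha₁ : 0 < a₁ := by linarith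
  have hp : 0 < a₁ * a₂ := mul_pos ha₁ ha₂
  have hroots := sub_one_mul_add_one_eq hsub hmul (by linarith)
  have hu : 0 ≤ (a₁ - 1) / a₁ := by
    refine div_nonneg (nonneg_of_mul_nonneg_left ?_ (by linarith : 0 < a₂ + 1)) ha₁.le
    rw [hroots]; positivity
  have hv : 0 ≤ (a₂ + 1) / a₂ := by positivity
  have hprod : (a₁ - 1) / a₁ * ((a₂ + 1) / a₂) = (2 * a - 3) ^ 2 := by
    rw [div_mul_div_comm, div_eq_iff hp.ne', hroots]
  have hsym : a₂ ^ 2 * ((a₁ - 1) / a₁) + a₁ ^ 2 * ((a₂ + 1) / a₂)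
      = (a₁ - a₂) ^ 2 + 2 * (a₁ * a₂) + (a₁ - a₂) ^ 3 / (a₁ * a₂) + 3 * (a₁ - a₂) := by
    field_simp
    ring
  rw [sq_mul_sqrt_add_mul_sqrt hu hv, hsym, hprod, sqrt_sq (by linarith), mul_assoc 2 a₂,
    mul_comm a₂, hsub, hmul]
  have : a - 1 ≠ 0 := by linarith
  field_simp
  ring

end

theorem stmt_9 (a : ℝ) (ha : a ∈ Set.Ioc (3/2 : ℝ) 2)
    (a₁ a₂ : ℝ)
    (ha₁ : a₁ = (Real.sqrt ((a+2)^2 + 4/(a-1)) + a + 2)/8)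
    (ha₂ : a₂ = (Real.sqrt ((a+2)^2 + 4/(a-1)) - (a+2))/8) :
    (a₂ * Real.sqrt ((a₁-1)/a₁) + a₁ * Real.sqrt ((a₂+1)/a₂))^2 =
        a^2*(a-1)*(a + 5/2)^2 / (4*(a-1)) ∧
      a^2*(a-1)*(a + 5/2)^2 / (4*(a-1)) = a^2*(a + 5/2)^2/4 := by
  have ha1 : 0 < a - 1 := by linarith [ha.1]
  have hc : 0 < 4 / (a - 1) := by positivity
  have hD := sqrt_add_mul_sqrt_sub (a + 2) (4 / (a - 1)) (by positivity)
  have hsub : a₁ - a₂ = (a + 2) / 4 := by rw [ha₁, ha₂]; ring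
  have hmul : a₁ * a₂ = 1 / (16 * (a - 1)) := by
    calc a₁ * a₂ = 4 / (a - 1) / 64 := by rw [ha₁, ha₂]; linear_combination hD / 64
      _ = 1 / (16 * (a - 1)) := by field_simp; norm_num
  have ha₂pos : 0 < a₂ := by
    rw [ha₂, sub_div, sub_pos, div_lt_div_iff_of_pos_right (by norm_num),
      lt_sqrt (by linarith)]
    linarith
  have hcancel : a^2*(a-1)*(a + 5/2)^2 / (4*(a-1)) = a^2*(a + 5/2)^2/4 := by
    field_simp
  rw [hcancel]
  exact ⟨sq_mul_sqrt_add_mul_sqrt_eq ha.1.le ha₂pos hsub hmul, rfl⟩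
end

section
/- For every real a ∈ (1,2], A₂ = a₂·A₁. -/
/-!
In `A₂ - a₂ A₁` the terms in `√((a₁-1)/a₁)` cancel, leaving
`2a √((a₂+1)/a₂) - 2(2a² + a - 2) - 16(a-1)a₂`. Now `a₂` is the positive root of
`16(a-1)x² + 4(a-1)(a+2)x = 1`, and on that root `(x+1)/x` is the square of
`(2a² + a - 2 + 8(a-1)x)/a`, so the difference vanishes.
-/

section
variable {a x : ℝ}

lemma pos_of_eq_quadratic_root (ha : 1 < a)
    (hx : x = (Real.sqrt ((a+2)^2 + 4/(a-1)) - (a+2))/8) : 0 < x := by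
  have hlt : a + 2 < Real.sqrt ((a+2)^2 + 4/(a-1)) :=
    (Real.lt_sqrt (by linarith)).2 (lt_add_of_pos_right _ (div_pos four_pos (sub_pos.2 ha)))
  rw [hx]
  linarith

lemma quadratic_of_eq_quadratic_root (ha : 1 < a)
    (hx : x = (Real.sqrt ((a+2)^2 + 4/(a-1)) - (a+2))/8) :
    16*(a-1)*x^2 + 4*(a-1)*(a+2)*x = 1 := by
  have hs := Real.sq_sqrt (show 0 ≤ (a+2)^2 + 4/(a-1) by
    have := sub_pos.2 ha; positivity)
  have hcancel : (a-1) * (4/(a-1)) = 4 := mul_div_cancel₀ _ (sub_pos.2 ha).ne'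
  rw [hx]
  linear_combination (a-1)/4 * hs + hcancel/4

lemma sqrt_succ_div_eq_of_quadratic (ha : 1 < a) (hx : 0 < x)
    (hq : 16*(a-1)*x^2 + 4*(a-1)*(a+2)*x = 1) :
    Real.sqrt ((x+1)/x) = (2*a^2 + a - 2 + 8*(a-1)*x)/a := by
  have ha0 : 0 < a := by linarith
  have hsq : (x+1)/x = ((2*a^2 + a - 2 + 8*(a-1)*x)/a)^2 := by
    field_simp
    linear_combination (-(4*(a-1)*x) - a^2) * hq
  rw [hsq, Real.sqrt_sq]
  have : 0 ≤ (a-1)*x := mul_nonneg (by linarith) hx.le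
  apply div_nonneg _ ha0.le
  nlinarith

end

theorem stmt_11 (a : ℝ) (ha : a ∈ Set.Ioc (1:ℝ) 2)
    (a₁ a₂ A₁ A₂ : ℝ)
    (ha₁ : a₁ = (Real.sqrt ((a+2)^2 + 4/(a-1)) + a + 2)/8)
    (ha₂ : a₂ = (Real.sqrt ((a+2)^2 + 4/(a-1)) - (a+2))/8)
    (hA₁ : A₁ = 16*(a-1) - (2*a/(a₁+a₂)) * (Real.sqrt ((a₂+1)/a₂) - Real.sqrt ((a₁-1)/a₁)))
    (hA₂ : A₂ = (2*a/(a₁+a₂)) * (a₂ * Real.sqrt ((a₁-1)/a₁) + a₁ * Real.sqrt ((a₂+1)/a₂))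
        - 2*(2*a^2 + a - 2)) :
    A₂ = a₂ * A₁ := by
  have ha1 : 1 < a := ha.1
  have hpos : 0 < a₂ := pos_of_eq_quadratic_root ha1 ha₂
  have hsum : a₁ + a₂ ≠ 0 := by
    have : a₁ = a₂ + (a+2)/4 := by rw [ha₁, ha₂]; ring
    rw [this]; linarith
  have hdiff : A₂ - a₂ * A₁ = 2*a*Real.sqrt ((a₂+1)/a₂) - 2*(2*a^2 + a - 2) - 16*(a-1)*a₂ := by
    rw [hA₂, hA₁]
    field_simp
    ring
  rw [sqrt_succ_div_eq_of_quadratic ha1 hpos (quadratic_of_eq_quadratic_root ha1 ha₂)] at hdiff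
  field_simp at hdiff
  linear_combination hdiff
end

section
/- For every real α ∈ (-1,1] with α ≠ 0, ∫₀¹ √(1-x²)/(1-αx²) dx = (π/2)·(1 - √(1-α))/α. -/
/-!
With `c = √(1 - α)`, the function `x ↦ c · arcsin (c x / √(1 - α x²))` is a primitive of
`(1 - α) / ((1 - α x²) √(1 - x²))` on `(-1, 1)`, continuous on `[-1, 1]` with value `c π / 2` at
`1`. Since
`√(1 - x²) / (1 - α x²) = (1 / √(1 - x²) - (1 - α) / ((1 - α x²) √(1 - x²))) / α`, the integrand
has the primitive `(arcsin x - c · arcsin (c x / √(1 - α x²))) / α`. The integrand is nonnegative,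
so its integrability on `[0, 1]`, despite the singularity of the primitive's pieces at `1`, comes
for free from the fundamental theorem of calculus.
-/

open Real Set MeasureTheory intervalIntegral

theorem integral_eq_sub_of_hasDerivAt_of_nonneg {f f' : ℝ → ℝ} {a b : ℝ} (hab : a ≤ b)
    (hcont : ContinuousOn f (Icc a b)) (hderiv : ∀ x ∈ Ioo a b, HasDerivAt f (f' x) x)
    (hpos : ∀ x ∈ Ioo a b, 0 ≤ f' x) :
    ∫ x in a..b, f' x = f b - f a :=
  integral_eq_sub_of_hasDerivAt_of_le hab hcont hderiv <|
    (intervalIntegrable_iff_integrableOn_Ioc_of_le hab).2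
      (integrableOn_deriv_of_nonneg hcont hderiv hpos)

noncomputable def arcsinPrimitive (α x : ℝ) : ℝ :=
  √(1 - α) * arcsin (√(1 - α) * x / √(1 - α * x ^ 2))

section

variable {α x : ℝ}

theorem one_sub_mul_sq_pos (hα : α ≤ 1) (hx : x ^ 2 < 1) : 0 < 1 - α * x ^ 2 := by
  nlinarith [sq_nonneg x]

theorem one_sub_sq_sqrt_mul_div_sqrt (hα : α ≤ 1) (hx : x ^ 2 < 1) :
    1 - (√(1 - α) * x / √(1 - α * x ^ 2)) ^ 2 = (1 - x ^ 2) / (1 - α * x ^ 2) := by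
  have hd := one_sub_mul_sq_pos hα hx
  rw [div_pow, mul_pow, sq_sqrt (by linarith), sq_sqrt hd.le, eq_div_iff hd.ne', sub_mul,
    div_mul_cancel₀ _ hd.ne']
  ring

theorem hasDerivAt_sqrt_mul_div_sqrt (hα : α ≤ 1) (hx : x ^ 2 < 1) :
    HasDerivAt (fun y ↦ √(1 - α) * y / √(1 - α * y ^ 2))
      (√(1 - α) / ((1 - α * x ^ 2) * √(1 - α * x ^ 2))) x := by
  have hd := one_sub_mul_sq_pos hα hx
  have hs : √(1 - α * x ^ 2) ≠ 0 := (sqrt_pos.2 hd).ne'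
  have hden : HasDerivAt (fun y ↦ √(1 - α * y ^ 2))
      (-(α * (2 * x)) / (2 * √(1 - α * x ^ 2))) x := by
    convert (((hasDerivAt_pow 2 x).const_mul α).const_sub 1).sqrt hd.ne' using 2
    simp
  refine (((hasDerivAt_id' x).const_mul √(1 - α)).div hden hs).congr_deriv ?_
  have hs2 := sq_sqrt hd.le
  field_simp
  linear_combination (-(√(1 - α) * α * x ^ 2)) * hs2

theorem hasDerivAt_arcsinPrimitive (hα : α ≤ 1) (hx : x ^ 2 < 1) :
    HasDerivAt (arcsinPrimitive α) ((1 - α) / ((1 - α * x ^ 2) * √(1 - x ^ 2))) x := by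
  have hd := one_sub_mul_sq_pos hα hx
  have hx' : 0 < 1 - x ^ 2 := by linarith
  set u := √(1 - α) * x / √(1 - α * x ^ 2)
  have hu : 1 - u ^ 2 = (1 - x ^ 2) / (1 - α * x ^ 2) := one_sub_sq_sqrt_mul_div_sqrt hα hx
  have hu1 : u ^ 2 < 1 := by
    have : 0 < 1 - u ^ 2 := hu ▸ div_pos hx' hd
    linarith
  have harcsin := hasDerivAt_arcsin (x := u) (by nlinarith) (by nlinarith)
  refine ((harcsin.comp x (hasDerivAt_sqrt_mul_div_sqrt hα hx)).const_mul √(1 - α)).congr_deriv ?_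
  rw [hu, sqrt_div hx'.le]
  have hs : 0 < √(1 - α * x ^ 2) := sqrt_pos.2 hd
  have ht : 0 < √(1 - x ^ 2) := sqrt_pos.2 hx'
  field_simp
  rw [sq_sqrt (by linarith)]

theorem continuousOn_arcsinPrimitive (hα : α ≤ 1) :
    ContinuousOn (arcsinPrimitive α) (Icc (-1) 1) := by
  rcases hα.lt_or_eq with hα | rfl
  · refine continuousOn_const.mul (continuous_arcsin.comp_continuousOn ?_)
    refine ContinuousOn.div (by fun_prop) (by fun_prop) fun y hy ↦ (sqrt_pos.2 ?_).ne'
    have hy2 : y ^ 2 ≤ 1 := by nlinarith [hy.1, hy.2]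
    rcases le_total 0 α with h | h
    · nlinarith [mul_le_mul_of_nonneg_left hy2 h]
    · nlinarith [sq_nonneg y]
  · have : arcsinPrimitive 1 = fun _ ↦ 0 := by
      funext y
      simp [arcsinPrimitive]
    exact this ▸ continuousOn_const

theorem arcsinPrimitive_zero : arcsinPrimitive α 0 = 0 := by
  simp [arcsinPrimitive]

theorem arcsinPrimitive_one (hα : α ≤ 1) : arcsinPrimitive α 1 = √(1 - α) * (π / 2) := by
  rcases hα.lt_or_eq with hα | rfl
  · have hs : √(1 - α) ≠ 0 := (sqrt_pos.2 (by linarith)).ne'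
    simp [arcsinPrimitive, hs]
  · simp [arcsinPrimitive]

theorem sqrt_one_sub_sq_div_eq (hα0 : α ≠ 0) (hd : 1 - α * x ^ 2 ≠ 0) (hx : 0 < 1 - x ^ 2) :
    √(1 - x ^ 2) / (1 - α * x ^ 2) =
      (1 / √(1 - x ^ 2) - (1 - α) / ((1 - α * x ^ 2) * √(1 - x ^ 2))) / α := by
  have ht : √(1 - x ^ 2) ≠ 0 := (sqrt_pos.2 hx).ne'
  have hs := sq_sqrt hx.le
  generalize √(1 - x ^ 2) = s at *
  generalize hD : 1 - α * x ^ 2 = d at *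
  field_simp
  linear_combination α * hs + hD

end

open Real in
theorem stmt_12 (α : ℝ) (hα : α ∈ Set.Ioc (-1:ℝ) 1) (hα0 : α ≠ 0) :
    ∫ x in (0:ℝ)..1, Real.sqrt (1 - x^2) / (1 - α*x^2) =
      (π/2) * (1 - Real.sqrt (1 - α)) / α := by
  have hα1 : α ≤ 1 := hα.2
  have hx2 : ∀ x ∈ Ioo (0 : ℝ) 1, x ^ 2 < 1 := fun x hx ↦ by nlinarith [hx.1, hx.2]
  have hderiv : ∀ x ∈ Ioo (0 : ℝ) 1, HasDerivAt (fun y ↦ (arcsin y - arcsinPrimitive α y) / α)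
      (√(1 - x ^ 2) / (1 - α * x ^ 2)) x := fun x hx ↦ by
    rw [sqrt_one_sub_sq_div_eq hα0 (one_sub_mul_sq_pos hα1 (hx2 x hx)).ne'
      (by linarith [hx2 x hx])]
    exact ((hasDerivAt_arcsin (by linarith [hx.1]) hx.2.ne).sub
      (hasDerivAt_arcsinPrimitive hα1 (hx2 x hx))).div_const α
  have hcont : ContinuousOn (fun y ↦ (arcsin y - arcsinPrimitive α y) / α) (Icc 0 1) :=
    ((continuous_arcsin.continuousOn.sub (continuousOn_arcsinPrimitive hα1)).div_const α).mono
      (Icc_subset_Icc (by norm_num) le_rfl)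
  have hpos : ∀ x ∈ Ioo (0 : ℝ) 1, 0 ≤ √(1 - x ^ 2) / (1 - α * x ^ 2) := fun x hx ↦
    div_nonneg (sqrt_nonneg _) (one_sub_mul_sq_pos hα1 (hx2 x hx)).le
  rw [integral_eq_sub_of_hasDerivAt_of_nonneg zero_le_one hcont hderiv hpos,
    arcsinPrimitive_one hα1, arcsinPrimitive_zero, arcsin_one, arcsin_zero]
  ring
end

section
/- For every real α > 0, ∫₀¹ √(1-x²)/(α + x²) dx = (π/2)·(√((1+α)/α) - 1). -/
/-!
With `g x = √(1 + α) · x / √(α + x²)` one has `1 - g x ² = α (1 - x²) / (α + x²)`, and this makes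
`F x = √((1 + α) / α) · arcsin (g x) - arcsin x` an antiderivative of the integrand on `(-1, 1)`.
Since `g 0 = 0` and `g 1 = 1`, the integral is `F 1 - F 0 = (π / 2) (√((1 + α) / α) - 1)`.
-/

open Real Set

theorem hasDerivAt_div_sqrt_add_sq {a x : ℝ} (h : 0 < a + x ^ 2) :
    HasDerivAt (fun y => y / √(a + y ^ 2)) (a / ((a + x ^ 2) * √(a + x ^ 2))) x := by
  have hsqrt : HasDerivAt (fun y => √(a + y ^ 2)) (x / √(a + x ^ 2)) x := by
    convert ((hasDerivAt_pow 2 x).const_add a).sqrt h.ne' using 1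
    field_simp
    ring
  refine ((hasDerivAt_id x).div hsqrt (by positivity)).congr_deriv ?_
  field_simp
  rw [sq_sqrt h.le, id]
  ring

theorem one_sub_sq_mul_div_sqrt_add_sq {a x : ℝ} (ha : 0 ≤ 1 + a) (h : 0 < a + x ^ 2) :
    1 - (√(1 + a) * (x / √(a + x ^ 2))) ^ 2 = a * (1 - x ^ 2) / (a + x ^ 2) := by
  rw [mul_pow, div_pow, sq_sqrt ha, sq_sqrt h.le]
  field_simp
  ring

theorem hasDerivAt_arcsin_mul_div_sqrt_add_sq {a x : ℝ} (ha : 0 < a) (hx : x ∈ Ioo (-1) 1) :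
    HasDerivAt (fun y => arcsin (√(1 + a) * (y / √(a + y ^ 2))))
      (√(1 + a) * √a / ((a + x ^ 2) * √(1 - x ^ 2))) x := by
  have hax : 0 < a + x ^ 2 := by positivity
  have h1x : 0 < 1 - x ^ 2 := by nlinarith [hx.1, hx.2]
  have hg := one_sub_sq_mul_div_sqrt_add_sq (by linarith) hax
  have hlt : |√(1 + a) * (x / √(a + x ^ 2))| < 1 := by
    rw [← sq_lt_one_iff_abs_lt_one]
    have : 0 < a * (1 - x ^ 2) / (a + x ^ 2) := by positivity
    linarith
  refine ((hasDerivAt_arcsin (abs_lt.mp hlt).1.ne' (abs_lt.mp hlt).2.ne).comp x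
    ((hasDerivAt_div_sqrt_add_sq hax).const_mul (√(1 + a)))).congr_deriv ?_
  rw [hg, sqrt_div (by positivity), sqrt_mul ha.le]
  field_simp
  exact (sq_sqrt ha.le).symm

theorem hasDerivAt_antideriv_sqrt_one_sub_sq_div_add_sq {a x : ℝ} (ha : 0 < a)
    (hx : x ∈ Ioo (-1) 1) :
    HasDerivAt (fun y => √((1 + a) / a) * arcsin (√(1 + a) * (y / √(a + y ^ 2))) - arcsin y)
      (√(1 - x ^ 2) / (a + x ^ 2)) x := by
  have h1x : 0 < 1 - x ^ 2 := by nlinarith [hx.1, hx.2]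
  refine (((hasDerivAt_arcsin_mul_div_sqrt_add_sq ha hx).const_mul _).sub
    (hasDerivAt_arcsin (by linarith [hx.1]) (by linarith [hx.2]))).congr_deriv ?_
  have : √(1 - x ^ 2) ≠ 0 := by positivity
  rw [sqrt_div (by linarith)]
  field_simp
  rw [sq_sqrt (by linarith), sq_sqrt h1x.le]
  ring

open Real in
theorem stmt_13 (α : ℝ) (hα : 0 < α) :
    ∫ x in (0:ℝ)..1, Real.sqrt (1 - x^2) / (α + x^2) =
      (π/2) * (Real.sqrt ((1+α)/α) - 1) := by
  have hcont_antideriv : Continuous fun y =>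
      √((1 + α) / α) * arcsin (√(1 + α) * (y / √(α + y ^ 2))) - arcsin y := by
    fun_prop (disch := intro; positivity)
  have hcont_integrand : Continuous fun x => √(1 - x ^ 2) / (α + x ^ 2) := by
    fun_prop (disch := intro; positivity)
  rw [intervalIntegral.integral_eq_sub_of_hasDeriv_right_of_le zero_le_one hcont_antideriv.continuousOn
    (fun x hx => (hasDerivAt_antideriv_sqrt_one_sub_sq_div_add_sq hα
      ⟨by linarith [hx.1], hx.2⟩).hasDerivWithinAt) (hcont_integrand.intervalIntegrable _ _)]
  have hg_one : √(1 + α) * (1 / √(α + 1 ^ 2)) = 1 := by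
    rw [one_pow, add_comm α, mul_one_div_cancel (by positivity)]
  simp only [hg_one, zero_div, mul_zero, arcsin_one, arcsin_zero]
  ring
end

section
/- For every real t with |t| < 1 and t ≠ 0, ∫₀¹ (1/(1-tx))·√((1-x)/x) dx = π·(1 - √(1-t))/t = π/(1 + √(1-t)). -/
/-!
With `u = √((1 - x) / x)` and `c = √(1 - s)`, the function `c · arctan (u / c)` has derivative
`(s - 1) u / (2 (1 - s x) (1 - x))` on `(0, 1)`. Taking the difference of the cases `s = t` and
`s = 0` leaves `t u / (1 - t x)`, so the integral is `2 / t` times the jump of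
`c · arctan (u / c) - arctan u` between `x = 0`, where `u → ∞`, and `x = 1`, where `u = 0`.
-/

open Real Set Filter Topology MeasureTheory intervalIntegral

lemma one_sub_mul_pos {s x : ℝ} (hs : s < 1) (hx : x ∈ Icc (0 : ℝ) 1) : 0 < 1 - s * x := by
  obtain ⟨hx0, hx1⟩ := hx
  rcases le_total s 0 with h | h <;> nlinarith

lemma intervalIntegrable_inv_sqrt {b : ℝ} (hb : 0 ≤ b) :
    IntervalIntegrable (fun x : ℝ => (√x)⁻¹) volume 0 b := by
  refine (intervalIntegrable_congr fun x hx => ?_).mp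
    (intervalIntegrable_rpow' (a := 0) (b := b) (r := -(1 / 2)) (by norm_num))
  rw [uIoc_of_le hb] at hx
  rw [rpow_neg hx.1.le, sqrt_eq_rpow]

lemma intervalIntegrable_mul_sqrt_one_sub_div {g : ℝ → ℝ} (hg : ContinuousOn g (Icc 0 1)) :
    IntervalIntegrable (fun x => g x * √((1 - x) / x)) volume 0 1 := by
  have hcont : ContinuousOn (fun x => g x * √(1 - x)) (uIcc 0 1) := by
    rw [uIcc_of_le zero_le_one]
    exact hg.mul (by fun_prop)
  refine (intervalIntegrable_congr fun x hx => ?_).mp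
    ((intervalIntegrable_inv_sqrt zero_le_one).continuousOn_mul hcont)
  rw [uIoc_of_le zero_le_one] at hx
  rw [sqrt_div' _ hx.1.le, mul_assoc, div_eq_mul_inv]

lemma hasDerivAt_sqrt_one_sub_div {x : ℝ} (hx : x ∈ Ioo (0 : ℝ) 1) :
    HasDerivAt (fun x => √((1 - x) / x)) (-√((1 - x) / x) / (2 * x * (1 - x))) x := by
  obtain ⟨hx0, hx1⟩ := hx
  have hpos : 0 < (1 - x) / x := div_pos (by linarith) hx0
  have hq : HasDerivAt (fun x => (1 - x) / x) (-1 / x ^ 2) x := by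
    refine (((hasDerivAt_id' x).const_sub 1).fun_div (hasDerivAt_id' x) hx0.ne').congr_deriv ?_
    ring
  refine (hq.sqrt hpos.ne').congr_deriv ?_
  set u := √((1 - x) / x)
  have hu2 : u ^ 2 = (1 - x) / x := sq_sqrt hpos.le
  have hupos : 0 < u := sqrt_pos.mpr hpos
  have hx1' : 1 - x ≠ 0 := by linarith
  field_simp
  rw [hu2]
  field_simp

noncomputable def arctanSqrtRatio (s x : ℝ) : ℝ :=
  √(1 - s) * arctan (√((1 - x) / x) / √(1 - s))

lemma hasDerivAt_arctanSqrtRatio {s x : ℝ} (hs : s < 1) (hx : x ∈ Ioo (0 : ℝ) 1) :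
    HasDerivAt (arctanSqrtRatio s)
      ((s - 1) * √((1 - x) / x) / (2 * (1 - s * x) * (1 - x))) x := by
  refine (((hasDerivAt_sqrt_one_sub_div hx).div_const _).arctan.const_mul _).congr_deriv ?_
  set u := √((1 - x) / x)
  set c := √(1 - s)
  have hc : 0 < c := sqrt_pos.mpr (by linarith)
  have hc2 : c ^ 2 = 1 - s := sq_sqrt (by linarith)
  have hu2 : u ^ 2 = (1 - x) / x := sq_sqrt (div_pos (by linarith [hx.2]) hx.1).le
  have hsx : 0 < 1 - s * x := one_sub_mul_pos hs (Ioo_subset_Icc_self hx)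
  have hx0 := hx.1.ne'
  have hx1 : 1 - x ≠ 0 := by linarith [hx.2]
  rw [div_pow, hu2]
  field_simp
  rw [hc2]
  ring

lemma tendsto_sqrt_one_sub_div_nhdsGT_zero :
    Tendsto (fun x : ℝ => √((1 - x) / x)) (𝓝[>] 0) atTop := by
  refine tendsto_sqrt_atTop.comp ?_
  refine (tendsto_atTop_add_const_right _ (-1) tendsto_inv_nhdsGT_zero).congr' ?_
  filter_upwards [self_mem_nhdsWithin] with x (hx : 0 < x)
  field_simp
  ring

lemma tendsto_arctanSqrtRatio_nhdsGT_zero {s : ℝ} (hs : s < 1) :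
    Tendsto (arctanSqrtRatio s) (𝓝[>] 0) (𝓝 (√(1 - s) * (π / 2))) :=
  ((tendsto_nhds_of_tendsto_nhdsWithin tendsto_arctan_atTop).comp
    (tendsto_sqrt_one_sub_div_nhdsGT_zero.atTop_div_const (sqrt_pos.mpr (by linarith)))).const_mul _

lemma tendsto_arctanSqrtRatio_nhdsLT_one (s : ℝ) :
    Tendsto (arctanSqrtRatio s) (𝓝[<] 1) (𝓝 0) := by
  have hcont : ContinuousAt (arctanSqrtRatio s) 1 := by
    unfold arctanSqrtRatio
    fun_prop (disch := norm_num)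
  have hzero : arctanSqrtRatio s 1 = 0 := by simp [arctanSqrtRatio]
  exact hzero ▸ hcont.tendsto.mono_left nhdsWithin_le_nhds

theorem integral_sqrt_one_sub_div_div_one_sub_mul {t : ℝ} (ht : t < 1) (ht0 : t ≠ 0) :
    ∫ x in (0 : ℝ)..1, 1 / (1 - t * x) * √((1 - x) / x) = π * (1 - √(1 - t)) / t := by
  have hderiv : ∀ x ∈ Ioo (0 : ℝ) 1, HasDerivAt
      (fun x => 2 / t * (arctanSqrtRatio t x - arctanSqrtRatio 0 x))
      (1 / (1 - t * x) * √((1 - x) / x)) x := by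
    intro x hx
    refine (((hasDerivAt_arctanSqrtRatio ht hx).sub
      (hasDerivAt_arctanSqrtRatio zero_lt_one hx)).const_mul _).congr_deriv ?_
    have hsx := (one_sub_mul_pos ht (Ioo_subset_Icc_self hx)).ne'
    have hx1 : 1 - x ≠ 0 := by linarith [hx.2]
    field_simp
    ring
  have hint : IntervalIntegrable (fun x => 1 / (1 - t * x) * √((1 - x) / x)) volume 0 1 :=
    intervalIntegrable_mul_sqrt_one_sub_div <|
      continuousOn_const.div (by fun_prop) fun x hx => (one_sub_mul_pos ht hx).ne'
  rw [integral_eq_sub_of_hasDerivAt_of_tendsto zero_lt_one hderiv hint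
    (((tendsto_arctanSqrtRatio_nhdsGT_zero ht).sub
      (tendsto_arctanSqrtRatio_nhdsGT_zero zero_lt_one)).const_mul _)
    (((tendsto_arctanSqrtRatio_nhdsLT_one t).sub
      (tendsto_arctanSqrtRatio_nhdsLT_one 0)).const_mul _)]
  field_simp
  norm_num
  ring

lemma one_sub_sqrt_one_sub_div {t : ℝ} (ht : t ≤ 1) (ht0 : t ≠ 0) :
    (1 - √(1 - t)) / t = 1 / (1 + √(1 - t)) := by
  rw [div_eq_div_iff ht0 (by positivity)]
  linear_combination -sq_sqrt (sub_nonneg.mpr ht)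

open Real in
theorem stmt_14 (t : ℝ) (ht : |t| < 1) (ht0 : t ≠ 0) :
    (∫ x in (0:ℝ)..1, (1/(1 - t*x)) * Real.sqrt ((1-x)/x)) =
        π * (1 - Real.sqrt (1 - t)) / t ∧
      π * (1 - Real.sqrt (1 - t)) / t = π / (1 + Real.sqrt (1 - t)) := by
  have ht1 : t < 1 := (abs_lt.mp ht).2
  refine ⟨integral_sqrt_one_sub_div_div_one_sub_mul ht1 ht0, ?_⟩
  rw [mul_div_assoc, one_sub_sqrt_one_sub_div ht1.le ht0, mul_one_div]
end

section
/- For every real a ∈ (0,1), ∫₀¹ √(x(1-x)) / (x² - ((a+2)/4)x - 1/(16(a-1))) dx = 2π(1/a - 1). -/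
/-!
The substitution `t = √(x / (1 - x))`, i.e. `x = t² / (1 + t²)`, turns the integrand into the
rational function `32 (1 - a) t² / ((1 + t²) (k t² + b t + 1) (k t² - b t + 1))` on `(0, ∞)`,
where `k = 3 - 2a` and `b² = 4 (3 + a) (1 - a)`: with `Q(x)` the denominator, the quartic
`16 (1 - a) (1 + t²)² Q(x)` splits into these two quadratics, each of discriminant `-4a²`. Partial fractions give an explicit
primitive made of `arctan t`, `log` of the ratio of the quadratics and two `arctan`s of affine
functions; it vanishes at `t = 0` and tends to `(2 - a) / a * π - π = 2π (1/a - 1)` at infinity.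
-/

open Real Filter Topology

lemma quadratic_pos_of_discr {k b c : ℝ} (hc : c ≠ 0) (h : b ^ 2 + 4 * c ^ 2 = 4 * k)
    (t : ℝ) :
    0 < k * t ^ 2 + b * t + 1 := by
  have hc2 : 0 < c ^ 2 := by positivity
  have hk : 0 < k := by nlinarith [sq_nonneg b]
  have : 4 * k * (k * t ^ 2 + b * t + 1) = (2 * k * t + b) ^ 2 + 4 * c ^ 2 := by
    linear_combination (-1 : ℝ) * h
  nlinarith [sq_nonneg (2 * k * t + b)]

lemma hasDerivAt_arctan_affine {k b c : ℝ} (hc : c ≠ 0) (h : b ^ 2 + 4 * c ^ 2 = 4 * k)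
    (t : ℝ) :
    HasDerivAt (fun t => arctan ((2 * k * t + b) / (2 * c))) (c / (k * t ^ 2 + b * t + 1)) t := by
  have hq := quadratic_pos_of_discr hc h t
  have hk : k ≠ 0 := by rintro rfl; apply hc; nlinarith [sq_nonneg b, sq_nonneg c]
  refine ((((hasDerivAt_id' t).const_mul (2 * k)).add_const b).div_const (2 * c)).arctan
    |>.congr_deriv ?_
  have e : 1 + ((2 * k * t + b) / (2 * c)) ^ 2 = k * (k * t ^ 2 + b * t + 1) / c ^ 2 := by
    field_simp
    linear_combination h
  rw [e]
  field_simp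

lemma tendsto_arctan_affine_div_atTop {m d e : ℝ} (hm : 0 < m) (he : 0 < e) :
    Tendsto (fun t => arctan ((m * t + d) / e)) atTop (𝓝 (π / 2)) :=
  (tendsto_arctan_atTop.mono_right nhdsWithin_le_nhds).comp
    ((tendsto_atTop_add_const_right _ d (tendsto_id.const_mul_atTop hm)).atTop_div_const he)

lemma tendsto_log_quadratic_sub_log_quadratic_atTop {k b c : ℝ} (hk : k ≠ 0)
    (hb : ∀ t, k * t ^ 2 + b * t + 1 ≠ 0) (hc : ∀ t, k * t ^ 2 + c * t + 1 ≠ 0) :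
    Tendsto (fun t => log (k * t ^ 2 + b * t + 1) - log (k * t ^ 2 + c * t + 1)) atTop
      (𝓝 0) := by
  have hcont : ContinuousAt (fun s => log ((k + b * s + s ^ 2) / (k + c * s + s ^ 2))) 0 :=
    ContinuousAt.log (ContinuousAt.div (by fun_prop) (by fun_prop) (by simpa using hk))
      (by simpa using hk)
  have hlim := hcont.tendsto.comp tendsto_inv_atTop_zero
  simp only [Function.comp_def, mul_zero, add_zero, ne_eq, OfNat.ofNat_ne_zero,
    not_false_eq_true, zero_pow, div_self hk, log_one] at hlim
  refine hlim.congr' ?_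
  filter_upwards [eventually_gt_atTop 0] with t ht
  rw [← log_div (hb t) (hc t)]
  congr 1
  field_simp

lemma tendsto_sqrt_div_one_sub_nhdsGT_zero :
    Tendsto (fun x : ℝ => √(x / (1 - x))) (𝓝[>] 0) (𝓝 0) := by
  have : ContinuousAt (fun x : ℝ => √(x / (1 - x))) 0 :=
    (continuousAt_id.div (continuousAt_const.sub continuousAt_id) (by norm_num)).sqrt
  simpa using this.tendsto.mono_left nhdsWithin_le_nhds

lemma tendsto_sqrt_div_one_sub_nhdsLT_one :
    Tendsto (fun x : ℝ => √(x / (1 - x))) (𝓝[<] 1) atTop := by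
  have hid : Tendsto (fun x : ℝ => x) (𝓝[<] 1) (𝓝 1) :=
    tendsto_nhdsWithin_of_tendsto_nhds tendsto_id
  have hsub : Tendsto (fun x : ℝ => 1 - x) (𝓝[<] 1) (𝓝[>] 0) := by
    refine tendsto_nhdsWithin_of_tendsto_nhds_of_eventually_within _ ?_ ?_
    · simpa using hid.const_sub 1
    · filter_upwards [self_mem_nhdsWithin] with x hx
      simpa using hx
  simpa only [div_eq_mul_inv, Function.comp_def] using
    tendsto_sqrt_atTop.comp (hid.pos_mul_atTop one_pos (tendsto_inv_nhdsGT_zero.comp hsub))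

noncomputable def primitive (a b t : ℝ) : ℝ :=
  -2 * arctan t
    - (1 - a) / b * (log ((3 - 2 * a) * t ^ 2 + b * t + 1) - log ((3 - 2 * a) * t ^ 2 - b * t + 1))
    + (2 - a) / a * (arctan ((2 * (3 - 2 * a) * t + b) / (2 * a))
      + arctan ((2 * (3 - 2 * a) * t - b) / (2 * a)))

section
variable {a b : ℝ} (ha0 : 0 < a) (ha1 : a < 1) (hb : b ^ 2 = 4 * (3 + a) * (1 - a))
include ha0 ha1 hb

lemma hasDerivAt_primitive (t : ℝ) :
    HasDerivAt (primitive a b)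
      (32 * (1 - a) * t ^ 2 / ((1 + t ^ 2) *
        (((3 - 2 * a) * t ^ 2 + b * t + 1) * ((3 - 2 * a) * t ^ 2 - b * t + 1)))) t := by
  have hdisc : b ^ 2 + 4 * a ^ 2 = 4 * (3 - 2 * a) := by linear_combination hb
  have hdisc' : (-b) ^ 2 + 4 * a ^ 2 = 4 * (3 - 2 * a) := by linear_combination hb
  have hb0 : b ≠ 0 := by rintro rfl; nlinarith
  have hp := quadratic_pos_of_discr ha0.ne' hdisc t
  have hm := quadratic_pos_of_discr ha0.ne' hdisc' t
  simp only [neg_mul, ← sub_eq_add_neg] at hm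
  have hquad (s : ℝ) : HasDerivAt (fun t => (3 - 2 * a) * t ^ 2 + s * t + 1)
      (2 * (3 - 2 * a) * t + s) t := by
    refine ((((hasDerivAt_pow 2 t).const_mul (3 - 2 * a)).add
      ((hasDerivAt_id' t).const_mul s)).add_const 1).congr_deriv ?_
    simp only [Nat.cast_ofNat]
    ring
  have hlog := ((hquad b).log hp.ne').sub
    ((hquad (-b)).log (by simpa [← sub_eq_add_neg] using hm.ne'))
  have hatan := (hasDerivAt_arctan_affine ha0.ne' hdisc t).add
    (hasDerivAt_arctan_affine ha0.ne' hdisc' t)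
  simp only [neg_mul, ← sub_eq_add_neg] at hlog hatan
  have := (((hasDerivAt_arctan t).const_mul (-2)).sub (hlog.const_mul ((1 - a) / b))).add
    (hatan.const_mul ((2 - a) / a))
  refine this.congr_deriv ?_
  have ht : 1 + t ^ 2 ≠ 0 := by positivity
  generalize hP : (3 - 2 * a) * t ^ 2 + b * t + 1 = P at hp ⊢
  generalize hM : (3 - 2 * a) * t ^ 2 - b * t + 1 = M at hm ⊢
  field_simp
  subst hP hM
  linear_combination 2 * b * t ^ 2 * hb

lemma tendsto_primitive_atTop :
    Tendsto (primitive a b) atTop (𝓝 ((2 - a) / a * π - π)) := by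
  have hdisc : b ^ 2 + 4 * a ^ 2 = 4 * (3 - 2 * a) := by linear_combination hb
  have hdisc' : (-b) ^ 2 + 4 * a ^ 2 = 4 * (3 - 2 * a) := by linear_combination hb
  have hk : 0 < 3 - 2 * a := by linarith
  have hlog := tendsto_log_quadratic_sub_log_quadratic_atTop hk.ne'
    (fun t => (quadratic_pos_of_discr ha0.ne' hdisc t).ne')
    (fun t => (quadratic_pos_of_discr ha0.ne' hdisc' t).ne')
  have hatan (d : ℝ) := tendsto_arctan_affine_div_atTop (d := d)
    (by positivity : 0 < 2 * (3 - 2 * a)) (by positivity : 0 < 2 * a)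
  simp only [neg_mul, ← sub_eq_add_neg] at hlog hatan
  have := (((tendsto_arctan_atTop.mono_right nhdsWithin_le_nhds).const_mul (-2)).sub
    (hlog.const_mul ((1 - a) / b))).add (((hatan b).add (hatan (-b))).const_mul ((2 - a) / a))
  simp only [← sub_eq_add_neg] at this
  rwa [show -2 * (π / 2) - (1 - a) / b * 0 + (2 - a) / a * (π / 2 + π / 2)
    = (2 - a) / a * π - π by ring] at this

lemma continuous_primitive : Continuous (primitive a b) :=
  continuous_iff_continuousAt.2 fun t => (hasDerivAt_primitive ha0 ha1 hb t).continuousAt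

lemma hasDerivAt_primitive_comp_sqrt {x : ℝ} (hx0 : 0 < x) (hx1 : x < 1) :
    HasDerivAt (fun x => primitive a b √(x / (1 - x)))
      (√(x * (1 - x)) / (x ^ 2 - ((a + 2) / 4) * x - 1 / (16 * (a - 1)))) x := by
  have h1x : 0 < 1 - x := by linarith
  have hT : HasDerivAt (fun x => √(x / (1 - x)))
      (1 / (1 - x) ^ 2 / (2 * √(x / (1 - x)))) x := by
    refine (((hasDerivAt_id' x).div ((hasDerivAt_id' x).const_sub 1)
      h1x.ne').sqrt (div_pos hx0 h1x).ne').congr_deriv ?_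
    simp only [Pi.div_apply]
    field_simp
    ring
  refine ((hasDerivAt_primitive ha0 ha1 hb _).comp x hT).congr_deriv ?_
  have hsqrt : √(x * (1 - x)) = √(x / (1 - x)) * (1 - x) := by
    rw [show x * (1 - x) = x / (1 - x) * (1 - x) ^ 2 by field_simp,
      sqrt_mul (by positivity), sqrt_sq h1x.le]
  rw [hsqrt]
  have ht0 : 0 < √(x / (1 - x)) := by positivity
  have ht2 : √(x / (1 - x)) ^ 2 = x / (1 - x) := sq_sqrt (by positivity)
  generalize √(x / (1 - x)) = t at ht0 ht2 ⊢
  have hx : x = t ^ 2 / (1 + t ^ 2) := by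
    field_simp at ht2 ⊢
    linarith
  subst hx
  have ha1' : a - 1 ≠ 0 := by linarith
  have h1a : 1 - a ≠ 0 := by linarith
  have hP := quadratic_pos_of_discr ha0.ne' (b := b) (k := 3 - 2 * a) (by linear_combination hb) t
  have hM := quadratic_pos_of_discr ha0.ne' (b := -b) (k := 3 - 2 * a) (by linear_combination hb) t
  simp only [neg_mul, ← sub_eq_add_neg] at hM
  have hone_sub : 1 - t ^ 2 / (1 + t ^ 2) = 1 / (1 + t ^ 2) := by field_simp; ring
  have hQ : (t ^ 2 / (1 + t ^ 2)) ^ 2 - (a + 2) / 4 * (t ^ 2 / (1 + t ^ 2)) - 1 / (16 * (a - 1))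
      = ((3 - 2 * a) * t ^ 2 + b * t + 1) * ((3 - 2 * a) * t ^ 2 - b * t + 1)
        / (16 * (1 - a) * (1 + t ^ 2) ^ 2) := by
    field_simp
    linear_combination 4 * (a - 1) * t ^ 2 * hb
  rw [hone_sub, hQ]
  field_simp
  ring

end

@[simp]
lemma primitive_zero (a b : ℝ) : primitive a b 0 = 0 := by
  simp [primitive, neg_div]

lemma quadratic_denominator_pos {a : ℝ} (ha0 : 0 < a) (ha1 : a < 1) (x : ℝ) :
    0 < x ^ 2 - ((a + 2) / 4) * x - 1 / (16 * (a - 1)) := by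
  have h1a : 0 < 1 - a := by linarith
  have ha1' : a - 1 ≠ 0 := by linarith
  have hscaled : 16 * (1 - a) * (x ^ 2 - ((a + 2) / 4) * x - 1 / (16 * (a - 1)))
      = 16 * (1 - a) * (x - (2 + a) / 8) ^ 2 + a ^ 2 * (3 + a) / 4 := by
    field_simp
    ring
  have : 0 < 16 * (1 - a) * (x ^ 2 - ((a + 2) / 4) * x - 1 / (16 * (a - 1))) := by
    rw [hscaled]; positivity
  exact pos_of_mul_pos_right this (by positivity)

open Real in
theorem stmt_17 (a : ℝ) (ha : a ∈ Set.Ioo (0:ℝ) 1) :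
    ∫ x in (0:ℝ)..1, Real.sqrt (x*(1-x)) / (x^2 - ((a+2)/4)*x - 1/(16*(a-1))) =
      2*π*(1/a - 1) := by
  obtain ⟨ha0, ha1⟩ := ha
  obtain ⟨b, hb⟩ : ∃ b : ℝ, b ^ 2 = 4 * (3 + a) * (1 - a) :=
    ⟨2 * √((3 + a) * (1 - a)), by rw [mul_pow, sq_sqrt (by nlinarith)]; ring⟩
  have hint : IntervalIntegrable
      (fun x => √(x * (1 - x)) / (x ^ 2 - ((a + 2) / 4) * x - 1 / (16 * (a - 1))))
      MeasureTheory.volume 0 1 :=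
    (Continuous.continuousOn (by fun_prop) |>.div (by fun_prop)
      fun x _ => (quadratic_denominator_pos ha0 ha1 x).ne').intervalIntegrable
  have hlim0 : Tendsto (fun x => primitive a b √(x / (1 - x))) (𝓝[>] 0) (𝓝 0) := by
    simpa [Function.comp_def] using
      (continuous_primitive ha0 ha1 hb).continuousAt.tendsto.comp
        tendsto_sqrt_div_one_sub_nhdsGT_zero
  have hlim1 := (tendsto_primitive_atTop ha0 ha1 hb).comp tendsto_sqrt_div_one_sub_nhdsLT_one
  rw [intervalIntegral.integral_eq_sub_of_hasDerivAt_of_tendsto zero_lt_one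
    (fun x hx => hasDerivAt_primitive_comp_sqrt ha0 ha1 hb hx.1 hx.2) hint hlim0 hlim1]
  field_simp
  ring
end

section
/- For every real a ∈ (0,1), ∫₀¹ (√(1-x)/√x) / (x² - ((a+2)/4)x - 1/(16(a-1))) dx = 8π(1/a - 1). -/
/-!
Write `s = √(x(1-x))`, `u = 1 + 2(1-a)x`, `β = 2√((1-a)(3+a))` and `p = (4-2a)x - 1`. On `[0,1]`
the polynomial `16(1-a)x² - 4(1-a)(2+a)x + 1`, which is `16(1-a)` times the denominator, equals
both `u² - (βs)²` and `p² + (2as)²`. Hence the integrand is the derivative on `(0,1)` of a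
combination of `log ((u - βs)/(u + βs))` and the polar angle `arccos (p / √(p² + (2as)²))` of
`(p, 2as)`. This antiderivative is continuous on `[0,1]`; since `s` vanishes at both ends, the
logarithmic part vanishes there and the angle runs from `π` to `0`, which gives `8π(1-a)/a`.
Integrability of the nonnegative integrand comes for free from the fundamental theorem of calculus.
-/

open Real

theorem HasDerivAt.log_sub_sub_log_add {u v : ℝ → ℝ} {u' v' x : ℝ} (hu : HasDerivAt u u' x)
    (hv : HasDerivAt v v' x) (h₁ : u x - v x ≠ 0) (h₂ : u x + v x ≠ 0) :
    HasDerivAt (fun y => Real.log (u y - v y) - Real.log (u y + v y))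
      (2 * (u' * v x - u x * v') / (u x ^ 2 - v x ^ 2)) x := by
  refine (((hu.sub hv).log h₁).sub ((hu.add hv).log h₂)).congr_deriv ?_
  simp only [Pi.sub_apply, Pi.add_apply]
  rw [sq_sub_sq]
  field_simp
  ring

theorem HasDerivAt.arccos_div_sqrt_sq_add_sq {p q : ℝ → ℝ} {p' q' x : ℝ}
    (hp : HasDerivAt p p' x) (hq : HasDerivAt q q' x) (hq₀ : 0 < q x) :
    HasDerivAt (fun y => Real.arccos (p y / √(p y ^ 2 + q y ^ 2)))
      ((p x * q' - q x * p') / (p x ^ 2 + q x ^ 2)) x := by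
  set r := √(p x ^ 2 + q x ^ 2) with hr_def
  have hN : 0 < p x ^ 2 + q x ^ 2 := by positivity
  have hr : 0 < r := sqrt_pos.2 hN
  have hr2 : r ^ 2 = p x ^ 2 + q x ^ 2 := sq_sqrt hN.le
  have hm : |p x / r| < 1 := by
    rw [abs_div, abs_of_pos hr, div_lt_one hr, ← sqrt_sq_eq_abs]
    exact sqrt_lt_sqrt (sq_nonneg _) (by linarith [pow_pos hq₀ 2])
  obtain ⟨hm₁, hm₂⟩ := abs_lt.1 hm
  have hsin : √(1 - (p x / r) ^ 2) = q x / r := by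
    rw [← sqrt_sq (div_pos hq₀ hr).le]
    congr 1
    field_simp
    linarith
  have h := (hasDerivAt_arccos hm₁.ne' hm₂.ne).comp x
    (hp.div (((hp.pow 2).add (hq.pow 2)).sqrt hN.ne') hr.ne')
  refine h.congr_deriv ?_
  simp only [Pi.add_apply, Pi.pow_apply, ← hr_def, hsin]
  rw [← hr2]
  field_simp
  norm_num
  linear_combination (-2 * p') * hr2

section
variable {a x s : ℝ}

lemma quadratic_eq_div (ha : a ≠ 1) :
    x ^ 2 - ((a + 2) / 4) * x - 1 / (16 * (a - 1)) =
      (16 * (1 - a) * x ^ 2 - 4 * (1 - a) * (2 + a) * x + 1) / (16 * (1 - a)) := by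
  have : 1 - a ≠ 0 := sub_ne_zero.2 (Ne.symm ha)
  have : a - 1 ≠ 0 := sub_ne_zero.2 ha
  field_simp
  ring

lemma normalized_quadratic_pos (ha₀ : 0 < a) (ha₁ : a < 1) :
    0 < 16 * (1 - a) * x ^ 2 - 4 * (1 - a) * (2 + a) * x + 1 := by
  nlinarith [mul_nonneg (sub_nonneg.2 ha₁.le) (sq_nonneg (8 * x - 2 - a)),
    mul_pos (mul_pos ha₀ ha₀) (by linarith : (0:ℝ) < 3 + a)]

lemma quadratic_pos (ha₀ : 0 < a) (ha₁ : a < 1) :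
    0 < x ^ 2 - ((a + 2) / 4) * x - 1 / (16 * (a - 1)) := by
  rw [quadratic_eq_div ha₁.ne]
  exact div_pos (normalized_quadratic_pos ha₀ ha₁) (by linarith)

lemma sq_sub_sq_eq_normalized_quadratic (ha₁ : a ≤ 1) (ha₃ : -3 ≤ a) (hs : s ^ 2 = x * (1 - x)) :
    (1 + 2 * (1 - a) * x) ^ 2 - (2 * √((1 - a) * (3 + a)) * s) ^ 2 =
      16 * (1 - a) * x ^ 2 - 4 * (1 - a) * (2 + a) * x + 1 := by
  rw [mul_pow, mul_pow, sq_sqrt (by nlinarith), hs]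
  ring

lemma sq_add_sq_eq_normalized_quadratic (hs : s ^ 2 = x * (1 - x)) :
    ((4 - 2 * a) * x - 1) ^ 2 + (2 * a * s) ^ 2 =
      16 * (1 - a) * x ^ 2 - 4 * (1 - a) * (2 + a) * x + 1 := by
  rw [mul_pow, hs]
  ring

lemma one_add_mul_add_pos (ha₁ : a ≤ 1) (hx : 0 ≤ x) :
    0 < 1 + 2 * (1 - a) * x + 2 * √((1 - a) * (3 + a)) * √(x * (1 - x)) := by
  have := sub_nonneg.2 ha₁
  positivity

lemma one_add_mul_sub_pos (ha₀ : 0 < a) (ha₁ : a < 1) (hx : x ∈ Set.Icc (0 : ℝ) 1) :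
    0 < 1 + 2 * (1 - a) * x - 2 * √((1 - a) * (3 + a)) * √(x * (1 - x)) := by
  have hs : √(x * (1 - x)) ^ 2 = x * (1 - x) := sq_sqrt (by nlinarith [hx.1, hx.2])
  have hprod := sq_sub_sq_eq_normalized_quadratic ha₁.le (by linarith) hs
  rw [sq_sub_sq] at hprod
  exact pos_of_mul_pos_right (hprod ▸ normalized_quadratic_pos ha₀ ha₁)
    (one_add_mul_add_pos ha₁.le hx.1).le

lemma hasDerivAt_sqrt_mul_one_sub (hx₀ : 0 < x) (hx₁ : x < 1) :
    HasDerivAt (fun y => √(y * (1 - y))) ((1 - 2 * x) / (2 * √(x * (1 - x)))) x := by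
  refine (((hasDerivAt_id' x).mul ((hasDerivAt_const x 1).sub (hasDerivAt_id' x))).sqrt
    (mul_pos hx₀ (sub_pos.2 hx₁)).ne').congr_deriv ?_
  simp only [Pi.mul_apply, Pi.sub_apply]
  ring

end

noncomputable def antideriv (a x : ℝ) : ℝ :=
  -(8 * (1 - a) / (2 * √((1 - a) * (3 + a)))) *
      (log (1 + 2 * (1 - a) * x - 2 * √((1 - a) * (3 + a)) * √(x * (1 - x)))
        - log (1 + 2 * (1 - a) * x + 2 * √((1 - a) * (3 + a)) * √(x * (1 - x))))
    - 8 * (1 - a) / a *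
      arccos (((4 - 2 * a) * x - 1) / √(((4 - 2 * a) * x - 1) ^ 2 + (2 * a * √(x * (1 - x))) ^ 2))

lemma antideriv_zero (a : ℝ) : antideriv a 0 = -(8 * (1 - a) / a) * π := by
  simp [antideriv]

lemma antideriv_one (a : ℝ) (ha₁ : a < 1) : antideriv a 1 = 0 := by
  have : 0 < 4 - 2 * a - 1 := by linarith
  simp [antideriv, sqrt_sq this.le, div_self this.ne']

section
variable {a : ℝ}

lemma continuousOn_antideriv (ha₀ : 0 < a) (ha₁ : a < 1) :
    ContinuousOn (antideriv a) (Set.Icc 0 1) := by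
  have hnorm (x : ℝ) (hx : x ∈ Set.Icc (0 : ℝ) 1) :
      √(((4 - 2 * a) * x - 1) ^ 2 + (2 * a * √(x * (1 - x))) ^ 2) ≠ 0 := by
    rw [sq_add_sq_eq_normalized_quadratic (sq_sqrt (by nlinarith [hx.1, hx.2]))]
    exact (sqrt_pos.2 (normalized_quadratic_pos ha₀ ha₁)).ne'
  refine ContinuousOn.sub (continuousOn_const.mul (ContinuousOn.sub ?_ ?_))
    (continuousOn_const.mul (continuous_arccos.comp_continuousOn ?_))
  · exact ContinuousOn.log (by fun_prop) fun x hx => (one_add_mul_sub_pos ha₀ ha₁ hx).ne'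
  · exact ContinuousOn.log (by fun_prop) fun x hx => (one_add_mul_add_pos ha₁.le hx.1).ne'
  · exact ContinuousOn.div (by fun_prop) (by fun_prop) hnorm

lemma hasDerivAt_antideriv (ha₀ : 0 < a) (ha₁ : a < 1) {x : ℝ} (hx : x ∈ Set.Ioo (0 : ℝ) 1) :
    HasDerivAt (antideriv a)
      (√(1 - x) / √x / (x ^ 2 - ((a + 2) / 4) * x - 1 / (16 * (a - 1)))) x := by
  obtain ⟨hx₀, hx₁⟩ := hx
  have hx₁' : 0 < 1 - x := sub_pos.2 hx₁
  have hs : √(x * (1 - x)) ^ 2 = x * (1 - x) := sq_sqrt (by positivity)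
  have hs₀ : 0 < √(x * (1 - x)) := sqrt_pos.2 (by positivity)
  have hβ₀ : 0 < √((1 - a) * (3 + a)) := sqrt_pos.2 (by nlinarith)
  have hu : HasDerivAt (fun y => 1 + 2 * (1 - a) * y) (2 * (1 - a)) x := by
    simpa using ((hasDerivAt_id x).const_mul (2 * (1 - a))).const_add 1
  have hp : HasDerivAt (fun y => (4 - 2 * a) * y - 1) (4 - 2 * a) x := by
    simpa using ((hasDerivAt_id x).const_mul (4 - 2 * a)).sub_const 1
  have hds := hasDerivAt_sqrt_mul_one_sub hx₀ hx₁
  have hlog := hu.log_sub_sub_log_add (hds.const_mul (2 * √((1 - a) * (3 + a))))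
    (one_add_mul_sub_pos ha₀ ha₁ ⟨hx₀.le, hx₁.le⟩).ne' (one_add_mul_add_pos ha₁.le hx₀.le).ne'
  have harc := hp.arccos_div_sqrt_sq_add_sq (hds.const_mul (2 * a)) (by positivity)
  refine ((hlog.const_mul _).sub (harc.const_mul _)).congr_deriv ?_
  rw [sq_sub_sq_eq_normalized_quadratic ha₁.le (by linarith) hs,
    sq_add_sq_eq_normalized_quadratic hs, quadratic_eq_div ha₁.ne]
  have hsx : √(x * (1 - x)) = √x * √(1 - x) := sqrt_mul hx₀.le _
  have ht : √x ^ 2 = x := sq_sqrt hx₀.le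
  have hw : √(1 - x) ^ 2 = 1 - x := sq_sqrt hx₁'.le
  have ht₀ : 0 < √x := sqrt_pos.2 hx₀
  have hw₀ : 0 < √(1 - x) := sqrt_pos.2 hx₁'
  rw [hsx]
  generalize √x = t at *
  generalize √(1 - x) = w at *
  generalize √((1 - a) * (3 + a)) = β at *
  field_simp
  rw [ht, hw]
  ring

end

open Real in
theorem stmt_18 (a : ℝ) (ha : a ∈ Set.Ioo (0:ℝ) 1) :
    ∫ x in (0:ℝ)..1, (Real.sqrt (1-x) / Real.sqrt x) / (x^2 - ((a+2)/4)*x - 1/(16*(a-1))) =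
      8*π*(1/a - 1) := by
  obtain ⟨ha₀, ha₁⟩ := ha
  have hcont := continuousOn_antideriv ha₀ ha₁
  have hderiv (x : ℝ) (hx : x ∈ Set.Ioo (0 : ℝ) 1) := hasDerivAt_antideriv ha₀ ha₁ hx
  have hint := intervalIntegral.intervalIntegrable_deriv_of_nonneg
    (by rwa [Set.uIcc_of_le zero_le_one]) (by simpa using hderiv)
    (fun x _ => div_nonneg (by positivity) (quadratic_pos ha₀ ha₁).le)
  rw [intervalIntegral.integral_eq_sub_of_hasDerivAt_of_le zero_le_one hcont hderiv hint,
    antideriv_one a ha₁, antideriv_zero]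
  field_simp
  ring
end

section
/- Let u₀ = 1 and suppose the sequences (uₙ)ₙ≥0 and (vₙ)ₙ≥1 of real numbers satisfy the convolution recursion u_{n+1} = Σ_{k=1}^{n+1} v_k · u_{n+1-k} for all n ≥ 0. If v_{n+1} = c^{n+1} Σ_{r=0}^{n} (1+q)^r Σ_{i₁+⋯+i_r = n-r, i_j ≥ 0} C_{i₁}⋯C_{i_r} (with the r = 0 term interpreted as δ_{n,0}) and the generating function T(x) = Σₙ uₙ xⁿ converges for |x| small, then T satisfies T(x) = 1 + cx·T(x)·(2 / (2 - (1+q)(1 - √(1 - 4cx)))) for all sufficiently small |x|, where c > 0 and q ∈ [-1,1]; equivalently T(x) = (1 - q + (1+q)√(1-4cx)) / (1 - q + (1+q)√(1-4cx) - 2cx). -/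
/-!
Write `C(y) = ∑ Cₙ yⁿ`. For `|y| ≤ 1/8` the bound `Cₙ ≤ 4ⁿ` makes every series below absolutely
convergent, and `C = 1 + y C²` gives `y C(y) = (1 - √(1 - 4y)) / 2`. The inner composition sum in
`v (n+1)` is the coefficient of `y^(n-r)` in `C(y)^r`, so `∑ v (n+1) xⁿ = c / (1 - (1+q) cx C(cx))`
is a geometric series in `(1+q) cx C(cx)`. Since `u` and `v` are nonnegative, the convolution
recursion becomes `T = 1 + x V T` through the Cauchy product, and solving for `T` gives both forms.
-/

open Finset Finset.Nat

section PowerSeriesSums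

variable {R : Type*} [NormedCommRing R]

theorem hasSum_antidiagonal_mul_pow [CompleteSpace R] {a b : ℕ → R} {y A B : R}
    (ha : HasSum (fun n => a n * y ^ n) A) (hb : HasSum (fun n => b n * y ^ n) B)
    (ha' : Summable fun n => ‖a n * y ^ n‖) (hb' : Summable fun n => ‖b n * y ^ n‖) :
    HasSum (fun n => (∑ kl ∈ antidiagonal n, a kl.1 * b kl.2) * y ^ n) (A * B) := by
  have h := (summable_norm_sum_mul_antidiagonal_of_summable_norm ha' hb').of_norm.hasSum
  rw [← tsum_mul_tsum_eq_tsum_sum_antidiagonal_of_summable_norm ha' hb', ha.tsum_eq,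
    hb.tsum_eq] at h
  refine (funext fun n => ?_ : (fun n => _) = _) ▸ h
  rw [sum_mul]
  refine sum_congr rfl fun kl hkl => ?_
  rw [← mem_antidiagonal.1 hkl, pow_add]
  ring

theorem eq_add_mul_of_hasSum_shift {a : ℕ → R} {y A B : R}
    (hA : HasSum (fun n => a n * y ^ n) A) (hB : HasSum (fun n => a (n + 1) * y ^ n) B) :
    A = a 0 + y * B := by
  have hA' := (hasSum_nat_add_iff' 1).2 hA
  simp only [range_one, sum_singleton, pow_zero, mul_one] at hA'
  have hB' : HasSum (fun n => a (n + 1) * y ^ (n + 1)) (y * B) := by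
    refine (funext fun n => ?_ : (fun n => _) = _) ▸ hB.mul_left y
    ring
  rw [← hA'.unique hB', add_sub_cancel]

theorem eq_one_add_mul_of_renewal [CompleteSpace R] {w u : ℕ → R} {x W U : R} (hu0 : u 0 = 1)
    (hrec : ∀ n, u (n + 1) = ∑ k ∈ range (n + 1), w k * u (n - k))
    (hW : HasSum (fun n => w n * x ^ n) W) (hU : HasSum (fun n => u n * x ^ n) U)
    (hW' : Summable fun n => ‖w n * x ^ n‖) (hU' : Summable fun n => ‖u n * x ^ n‖) :
    U = 1 + x * (W * U) := by
  have h := hasSum_antidiagonal_mul_pow hW hU hW' hU'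
  simp_rw [sum_antidiagonal_eq_sum_range_succ (fun k l => w k * u l), ← hrec] at h
  simpa only [hu0] using eq_add_mul_of_hasSum_shift hU h

end PowerSeriesSums

theorem summable_norm_mul_pow_of_nonneg {a : ℕ → ℝ} (ha : ∀ n, 0 ≤ a n) {y : ℝ}
    (h : Summable fun n => a n * |y| ^ n) : Summable fun n => ‖a n * y ^ n‖ :=
  h.congr fun n => by
    rw [norm_mul, norm_pow, Real.norm_eq_abs, Real.norm_eq_abs, abs_of_nonneg (ha n)]

theorem renewal_nonneg {w u : ℕ → ℝ} (hw : ∀ n, 0 ≤ w n) (hu0 : 0 ≤ u 0)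
    (hrec : ∀ n, u (n + 1) = ∑ k ∈ range (n + 1), w k * u (n - k)) (n : ℕ) : 0 ≤ u n := by
  induction n using Nat.strong_induction_on with
  | _ n ih =>
    cases n with
    | zero => exact hu0
    | succ n => rw [hrec]; exact sum_nonneg fun k _ => mul_nonneg (hw k) (ih _ (by omega))

theorem HasSum.sum_antidiagonal {α : Type*} [AddCommMonoid α] [TopologicalSpace α]
    [ContinuousAdd α] [RegularSpace α] {f : ℕ × ℕ → α} {a : α} (h : HasSum f a) :
    HasSum (fun n => ∑ p ∈ antidiagonal n, f p) a :=
  ((HasAntidiagonal.sigmaAntidiagonalEquivProd.hasSum_iff).2 h).sigma fun n =>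
    (sum_coe_sort (antidiagonal n) f) ▸ hasSum_fintype _

theorem Finset.Nat.sum_antidiagonalTuple_succ {M : Type*} [AddCommMonoid M] (k n : ℕ)
    (f : (Fin (k + 1) → ℕ) → M) :
    ∑ t ∈ antidiagonalTuple (k + 1) n, f t =
      ∑ p ∈ antidiagonal n, ∑ t ∈ antidiagonalTuple k p.2, f (Fin.cons p.1 t) := by
  have h : (antidiagonalTuple (k + 1) n).val =
      (antidiagonal n).val.bind fun p => (antidiagonalTuple k p.2).val.map (Fin.cons p.1) := by
    simp only [antidiagonalTuple, Multiset.Nat.antidiagonalTuple, List.Nat.antidiagonalTuple,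
      ← Multiset.coe_bind, ← Multiset.map_coe]
    rfl
  simp only [Finset.sum, h, Multiset.map_bind, Multiset.sum_bind, Multiset.map_map]
  rfl

section Catalan

theorem catalan_le_four_pow (n : ℕ) : catalan n ≤ 4 ^ n :=
  (Nat.le_mul_of_pos_left _ n.succ_pos).trans
    ((succ_mul_catalan_eq_centralBinom n).trans_le (Nat.centralBinom_le_four_pow n))

variable {y : ℝ}

theorem catalan_mul_pow_le (hy : |y| ≤ 1 / 8) (n : ℕ) :
    (catalan n : ℝ) * |y| ^ n ≤ (1 / 2) ^ n :=
  calc (catalan n : ℝ) * |y| ^ n ≤ 4 ^ n * (1 / 8) ^ n := by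
        gcongr
        exact_mod_cast catalan_le_four_pow n
    _ = (1 / 2) ^ n := by rw [← mul_pow]; norm_num

theorem summable_catalan_mul_pow (hy : |y| ≤ 1 / 8) :
    Summable fun n => (catalan n : ℝ) * |y| ^ n :=
  .of_nonneg_of_le (fun _ => by positivity) (catalan_mul_pow_le hy) summable_geometric_two

theorem summable_norm_catalan_mul_pow (hy : |y| ≤ 1 / 8) :
    Summable fun n => ‖(catalan n : ℝ) * y ^ n‖ :=
  summable_norm_mul_pow_of_nonneg (fun _ => Nat.cast_nonneg _) (summable_catalan_mul_pow hy)

noncomputable def catalanGF (y : ℝ) : ℝ := ∑' n, (catalan n : ℝ) * y ^ n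

theorem hasSum_catalanGF (hy : |y| ≤ 1 / 8) :
    HasSum (fun n => (catalan n : ℝ) * y ^ n) (catalanGF y) :=
  (summable_norm_catalan_mul_pow hy).of_norm.hasSum

theorem abs_catalanGF_le (hy : |y| ≤ 1 / 8) : |catalanGF y| ≤ 2 := by
  calc |catalanGF y| ≤ ∑' n, ‖(catalan n : ℝ) * y ^ n‖ :=
        norm_tsum_le_tsum_norm (summable_norm_catalan_mul_pow hy)
    _ = ∑' n, (catalan n : ℝ) * |y| ^ n := by
        simp only [norm_mul, norm_pow, Real.norm_eq_abs, Nat.abs_cast]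
    _ ≤ ∑' n : ℕ, (1 / 2 : ℝ) ^ n :=
        (summable_catalan_mul_pow hy).tsum_le_tsum (catalan_mul_pow_le hy) summable_geometric_two
    _ = 2 := tsum_geometric_two

theorem abs_mul_catalanGF_le (hy : |y| ≤ 1 / 8) : |y * catalanGF y| ≤ 1 / 4 := by
  rw [abs_mul]
  nlinarith [abs_catalanGF_le hy, abs_nonneg y, abs_nonneg (catalanGF y)]

theorem catalanGF_eq (hy : |y| ≤ 1 / 8) : catalanGF y = 1 + y * (catalanGF y * catalanGF y) := by
  have h := hasSum_antidiagonal_mul_pow (hasSum_catalanGF hy) (hasSum_catalanGF hy)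
    (summable_norm_catalan_mul_pow hy) (summable_norm_catalan_mul_pow hy)
  simp_rw [← Nat.cast_mul, ← Nat.cast_sum, ← catalan_succ'] at h
  simpa using eq_add_mul_of_hasSum_shift (hasSum_catalanGF hy) h

theorem mul_catalanGF_eq (hy : |y| ≤ 1 / 8) : y * catalanGF y = (1 - √(1 - 4 * y)) / 2 := by
  have hsq : (1 - 2 * (y * catalanGF y)) ^ 2 = 1 - 4 * y := by
    linear_combination (-4 * y) * catalanGF_eq hy
  have hnonneg : 0 ≤ 1 - 2 * (y * catalanGF y) := by
    linarith [(abs_le.1 (abs_mul_catalanGF_le hy)).2]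
  rw [← hsq, Real.sqrt_sq hnonneg]
  ring

noncomputable def catalanPowCoeff (r m : ℕ) : ℝ :=
  ∑ t ∈ antidiagonalTuple r m, ∏ j, (catalan (t j) : ℝ)

theorem catalanPowCoeff_nonneg (r m : ℕ) : 0 ≤ catalanPowCoeff r m :=
  sum_nonneg fun _ _ => prod_nonneg fun _ _ => Nat.cast_nonneg _

theorem catalanPowCoeff_zero (m : ℕ) : catalanPowCoeff 0 m = if m = 0 then 1 else 0 := by
  cases m <;> simp [catalanPowCoeff]

theorem catalanPowCoeff_succ (r n : ℕ) :
    catalanPowCoeff (r + 1) n = ∑ kl ∈ antidiagonal n, catalan kl.1 * catalanPowCoeff r kl.2 := by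
  rw [catalanPowCoeff, sum_antidiagonalTuple_succ]
  refine sum_congr rfl fun kl _ => ?_
  rw [catalanPowCoeff, mul_sum]
  refine sum_congr rfl fun t _ => ?_
  simp only [Fin.prod_univ_succ, Fin.cons_zero, Fin.cons_succ]

theorem hasSum_catalanPowCoeff (r : ℕ) (hy : |y| ≤ 1 / 8) :
    HasSum (fun m => catalanPowCoeff r m * y ^ m) (catalanGF y ^ r) := by
  induction r generalizing y with
  | zero =>
    refine (funext fun m => ?_ : (fun m => _) = _) ▸ hasSum_ite_eq 0 (catalanGF y ^ 0)
    rcases m with _ | m <;> simp [catalanPowCoeff_zero]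
  | succ r ih =>
    have hy' : |(|y|)| ≤ 1 / 8 := by rwa [abs_abs]
    have h := hasSum_antidiagonal_mul_pow (hasSum_catalanGF hy) (ih hy)
      (summable_norm_catalan_mul_pow hy)
      (summable_norm_mul_pow_of_nonneg (catalanPowCoeff_nonneg r) (ih hy').summable)
    simpa only [← catalanPowCoeff_succ, ← pow_succ'] using h

noncomputable def catalanGeomCoeff (a : ℝ) (n : ℕ) : ℝ :=
  ∑ r ∈ range (n + 1), a ^ r * catalanPowCoeff r (n - r)

theorem catalanGeomCoeff_nonneg {a : ℝ} (ha : 0 ≤ a) (n : ℕ) : 0 ≤ catalanGeomCoeff a n :=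
  sum_nonneg fun r _ => mul_nonneg (pow_nonneg ha r) (catalanPowCoeff_nonneg _ _)

theorem hasSum_catalanGeom_row (a : ℝ) (r : ℕ) (hy : |y| ≤ 1 / 8) :
    HasSum (fun m => a ^ r * catalanPowCoeff r m * y ^ (r + m)) ((a * (y * catalanGF y)) ^ r) := by
  rw [mul_pow, mul_pow, ← mul_assoc]
  refine (funext fun m => ?_ : (fun m => _) = _) ▸
    (hasSum_catalanPowCoeff r hy).mul_left (a ^ r * y ^ r)
  ring

theorem hasSum_catalanGeomCoeff {a : ℝ} (ha : |a| ≤ 2) (hy : |y| ≤ 1 / 8) :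
    HasSum (fun n => catalanGeomCoeff a n * y ^ n) (1 - a * (y * catalanGF y))⁻¹ := by
  -- expand `∑ r, (a y C(y))^r` as a double series over `(r, m)` and regroup along `r + m = n`
  set F : ℕ × ℕ → ℝ := fun p => a ^ p.1 * catalanPowCoeff p.1 p.2 * y ^ (p.1 + p.2)
  have hy' : |(|y|)| ≤ 1 / 8 := by rwa [abs_abs]
  have hratio {b z : ℝ} (hb : |b| ≤ 2) (hz : |z| ≤ 1 / 8) : |b * (z * catalanGF z)| < 1 :=
    calc |b * (z * catalanGF z)| ≤ 2 * (1 / 4) := by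
          rw [abs_mul]; exact mul_le_mul hb (abs_mul_catalanGF_le hz) (abs_nonneg _) (by norm_num)
      _ < 1 := by norm_num
  have hF_norm : Summable fun p => ‖F p‖ := by
    have hrow (r : ℕ) : HasSum (fun m => ‖F (r, m)‖) ((|a| * (|y| * catalanGF |y|)) ^ r) := by
      refine (funext fun m => ?_ : (fun m => _) = _) ▸ hasSum_catalanGeom_row |a| r hy'
      simp only [F, Real.norm_eq_abs, abs_mul, abs_pow, abs_of_nonneg (catalanPowCoeff_nonneg _ _)]
    refine (summable_prod_of_nonneg fun _ => norm_nonneg _).2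
      ⟨fun r => (hrow r).summable, ?_⟩
    simp only [fun r => (hrow r).tsum_eq]
    exact summable_geometric_of_abs_lt_one (hratio (by rwa [abs_abs]) hy')
  have hF : HasSum F (1 - a * (y * catalanGF y))⁻¹ := by
    have hF := hF_norm.of_norm.hasSum
    have hgeom := hasSum_geometric_of_abs_lt_one (hratio ha hy)
    rwa [(hF.prod_fiberwise fun r => hasSum_catalanGeom_row a r hy).unique hgeom] at hF
  refine (funext fun n => ?_ : (fun n => _) = _) ▸ hF.sum_antidiagonal
  rw [sum_antidiagonal_eq_sum_range_succ (fun r m => F (r, m)), catalanGeomCoeff, sum_mul]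
  refine sum_congr rfl fun r hr => ?_
  simp only [F]
  rw [Nat.add_sub_of_le (Nat.lt_succ_iff.1 (mem_range.1 hr))]

end Catalan

theorem closed_forms_of_fixed_point {c q x t : ℝ} (hq : q ∈ Set.Icc (-1 : ℝ) 1)
    (hcx : |c * x| ≤ 1 / 8)
    (ht : t = 1 + x * (c * (1 - (1 + q) * ((1 - √(1 - 4 * c * x)) / 2))⁻¹ * t)) :
    t = 1 + c * x * t * (2 / (2 - (1 + q) * (1 - √(1 - 4 * c * x)))) ∧
      t = (1 - q + (1 + q) * √(1 - 4 * c * x)) /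
        (1 - q + (1 + q) * √(1 - 4 * c * x) - 2 * c * x) := by
  obtain ⟨hq1, hq2⟩ := hq
  obtain ⟨hcx1, hcx2⟩ := abs_le.1 hcx
  set s := √(1 - 4 * c * x)
  have hs_sq : s ^ 2 = 1 - 4 * c * x := Real.sq_sqrt (by nlinarith)
  have hs : 7 / 10 ≤ s := by nlinarith [Real.sqrt_nonneg (1 - 4 * c * x)]
  have hD : 7 / 10 ≤ 1 - (1 + q) * ((1 - s) / 2) := by
    rcases le_total s 1 with h | h
    · nlinarith [mul_nonneg (sub_nonneg.2 h) (sub_nonneg.2 hq2)]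
    · nlinarith [mul_nonneg (sub_nonneg.2 h) (neg_le_iff_add_nonneg.1 hq1)]
  set D := 1 - (1 + q) * ((1 - s) / 2)
  have key : t * D = D + c * x * t := by
    conv_lhs => rw [ht]
    field_simp
  rw [show 2 - (1 + q) * (1 - s) = 2 * D by ring, show 1 - q + (1 + q) * s = 2 * D by ring]
  constructor
  · field_simp
    linear_combination key
  · rw [eq_div_iff (by nlinarith)]
    linear_combination 2 * key

theorem stmt_19 (c q : ℝ) (hc : 0 < c) (hq : q ∈ Set.Icc (-1:ℝ) 1)
    (u v : ℕ → ℝ) (T : ℝ → ℝ)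
    (hu0 : u 0 = 1)
    (hrec : ∀ n : ℕ, u (n+1) = ∑ k ∈ Finset.range (n+1), v (k+1) * u (n-k))
    (hv : ∀ n : ℕ, v (n+1) = c^(n+1) * ∑ r ∈ Finset.range (n+1), (1+q)^r *
        ∑ i ∈ Finset.Nat.antidiagonalTuple r (n-r), ∏ j, (catalan (i j) : ℝ))
    (hT : ∃ ε > 0, ∀ x : ℝ, |x| < ε → HasSum (fun n => u n * x^n) (T x)) :
    ∃ δ > 0, ∀ x : ℝ, |x| < δ →
      T x = 1 + c*x*T x * (2 / (2 - (1+q)*(1 - Real.sqrt (1 - 4*c*x)))) ∧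
      T x = (1 - q + (1+q)*Real.sqrt (1 - 4*c*x)) /
        (1 - q + (1+q)*Real.sqrt (1 - 4*c*x) - 2*c*x) := by
  obtain ⟨ε, hε, hT⟩ := hT
  have hq' : |1 + q| ≤ 2 := abs_le.2 ⟨by linarith [hq.1], by linarith [hq.2]⟩
  have hv' : ∀ n, v (n + 1) = c ^ (n + 1) * catalanGeomCoeff (1 + q) n := hv
  have hv_nonneg (n : ℕ) : 0 ≤ v (n + 1) :=
    hv' n ▸ mul_nonneg (by positivity) (catalanGeomCoeff_nonneg (by linarith [hq.1]) n)
  have hu_nonneg := renewal_nonneg hv_nonneg (hu0 ▸ zero_le_one) hrec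
  have hV {z : ℝ} (hz : |c * z| ≤ 1 / 8) :
      HasSum (fun n => v (n + 1) * z ^ n) (c * (1 - (1 + q) * (c * z * catalanGF (c * z)))⁻¹) := by
    refine (funext fun n => ?_ : (fun n => _) = _) ▸ (hasSum_catalanGeomCoeff hq' hz).mul_left c
    rw [hv', mul_pow, pow_succ]
    ring
  refine ⟨min ε (1 / (8 * c)), by positivity, fun x hx => ?_⟩
  have hxε : |x| < ε := hx.trans_le (min_le_left _ _)
  have hcx : |c * x| ≤ 1 / 8 := by
    rw [abs_mul, abs_of_pos hc, ← le_div_iff₀' hc, div_div]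
    exact hx.le.trans (min_le_right _ _)
  have hcx' : |c * (|x|)| ≤ 1 / 8 := by rwa [abs_mul, abs_abs, ← abs_mul]
  have key := eq_one_add_mul_of_renewal hu0 hrec (hV hcx) (hT x hxε)
    (summable_norm_mul_pow_of_nonneg hv_nonneg (hV hcx').summable)
    (summable_norm_mul_pow_of_nonneg hu_nonneg (hT |x| (by rwa [abs_abs])).summable)
  rw [mul_catalanGF_eq hcx, ← mul_assoc 4 c x] at key
  exact closed_forms_of_fixed_point hq hcx key
end
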